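/- arXiv:1312.2298 — 7 statements merged into one kernel-verified Lean document; each statement's English description precedes it below -/
import Mathlib

section
/- Let ξ be the Cantor measure. Then for every x in the support of ξ, the pointwise dimension D_ξ(x) exists and equals log 2 / log 3. -/
open MeasureTheory Filter Metric Topology ProbabilityTheory

/-!
Write `x = cantorMap b` for the digit sequence `b` of `x`. A ball of radius `ε > 3⁻ⁿ` about `x`
contains the image of the cylinder of sequences agreeing with `b` on the first `n` digits, while a
ball of radius `ε ≤ 3⁻ⁿ / 2` meets the image of a single such cylinder only, because sequences first
differing at digit `k` are mapped at least `3^-(k+1)` apart. Every cylinder of length `n` has mass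
`2⁻ⁿ`, so `ξ (ball x ε)` is comparable to `ε ^ (log 2 / log 3)`.
-/

noncomputable def cantorMap (b : ℕ → Bool) : ℝ := ∑' n, 2 * ((b n).toNat : ℝ) / 3 ^ (n + 1)

namespace cantorMap

lemma digit_term_le_majorant (c : Bool) (n : ℕ) :
    2 * (c.toNat : ℝ) / 3 ^ (n + 1) ≤ 2 * 3⁻¹ ^ (n + 1) := by
  rw [inv_pow, ← div_eq_mul_inv]
  gcongr
  cases c <;> norm_num

lemma summable_majorant : Summable fun n : ℕ => 2 * (3 : ℝ)⁻¹ ^ (n + 1) :=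
  ((summable_nat_add_iff 1).2
    (summable_geometric_of_lt_one (by norm_num) (by norm_num))).mul_left 2

lemma summable_digit_terms (b : ℕ → Bool) :
    Summable fun n => 2 * ((b n).toNat : ℝ) / 3 ^ (n + 1) :=
  .of_nonneg_of_le (fun _ => by positivity) (fun n => digit_term_le_majorant _ n) summable_majorant

lemma nonneg (b : ℕ → Bool) : 0 ≤ cantorMap b := tsum_nonneg fun _ => by positivity

lemma le_one (b : ℕ → Bool) : cantorMap b ≤ 1 := calc
  cantorMap b ≤ ∑' n : ℕ, 2 * (3 : ℝ)⁻¹ ^ (n + 1) :=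
    (summable_digit_terms b).tsum_le_tsum (fun n => digit_term_le_majorant _ n) summable_majorant
  _ = 1 := by
    simp only [pow_succ, ← mul_assoc, tsum_mul_right, tsum_mul_left,
      tsum_geometric_of_lt_one (by norm_num : (0:ℝ) ≤ 3⁻¹) (by norm_num)]
    norm_num

theorem continuous : Continuous cantorMap :=
  continuous_tsum (fun n => (continuous_const.mul ((continuous_of_discreteTopology
    (f := fun c : Bool => (c.toNat : ℝ))).comp (continuous_apply n))).div_const _)
    summable_majorant fun n b => by
      rw [Real.norm_of_nonneg (by positivity)]; exact digit_term_le_majorant _ n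

theorem eq_sum_add_shift (b : ℕ → Bool) (n : ℕ) :
    cantorMap b = ∑ k ∈ Finset.range n, 2 * ((b k).toNat : ℝ) / 3 ^ (k + 1)
      + 3⁻¹ ^ n * cantorMap (fun k => b (k + n)) := by
  rw [cantorMap, ← (summable_digit_terms b).sum_add_tsum_nat_add n, cantorMap, ← tsum_mul_left]
  congr 2
  ext k
  rw [show k + n + 1 = k + 1 + n by ring, pow_add, inv_pow]
  field_simp

lemma sum_digit_terms_congr {b b' : ℕ → Bool} {n : ℕ} (h : ∀ k < n, b k = b' k) :
    ∑ k ∈ Finset.range n, 2 * ((b k).toNat : ℝ) / 3 ^ (k + 1)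
      = ∑ k ∈ Finset.range n, 2 * ((b' k).toNat : ℝ) / 3 ^ (k + 1) :=
  Finset.sum_congr rfl fun k hk => by rw [h k (Finset.mem_range.1 hk)]

theorem abs_sub_le_of_eqOn {b b' : ℕ → Bool} {n : ℕ} (h : ∀ k < n, b k = b' k) :
    |cantorMap b - cantorMap b'| ≤ 3⁻¹ ^ n := by
  rw [eq_sum_add_shift b n, eq_sum_add_shift b' n, sum_digit_terms_congr h,
    add_sub_add_left_eq_sub, ← mul_sub, abs_mul, abs_of_pos (by positivity)]
  refine mul_le_of_le_one_right (by positivity) (abs_sub_le_iff.2 ⟨?_, ?_⟩) <;>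
    linarith [nonneg (fun k => b (k + n)), le_one (fun k => b (k + n)),
      nonneg (fun k => b' (k + n)), le_one (fun k => b' (k + n))]

lemma pow_le_sub_of_first_diff {b b' : ℕ → Bool} {k : ℕ} (h : ∀ j < k, b j = b' j)
    (hb : b k = true) (hb' : b' k = false) : 3⁻¹ ^ (k + 1) ≤ cantorMap b - cantorMap b' := by
  rw [eq_sum_add_shift b (k + 1), eq_sum_add_shift b' (k + 1), Finset.sum_range_succ,
    Finset.sum_range_succ, sum_digit_terms_congr h, hb, hb']
  have hq : (0 : ℝ) < 3⁻¹ ^ (k + 1) := by positivity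
  have htail : 0 ≤ 3⁻¹ ^ (k + 1) * cantorMap fun j => b (j + (k + 1)) :=
    mul_nonneg hq.le (nonneg _)
  have htail' : 3⁻¹ ^ (k + 1) * (cantorMap fun j => b' (j + (k + 1))) ≤ 3⁻¹ ^ (k + 1) :=
    mul_le_of_le_one_right hq.le (le_one _)
  simp only [Bool.toNat_true, Bool.toNat_false, Nat.cast_one, Nat.cast_zero, mul_one, mul_zero,
    div_eq_mul_inv, inv_pow] at hq htail htail' ⊢
  linarith

theorem eqOn_of_abs_sub_lt {b b' : ℕ → Bool} {n : ℕ}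
    (h : |cantorMap b - cantorMap b'| < 3⁻¹ ^ n) : ∀ k < n, b k = b' k := by
  intro k
  induction k using Nat.strong_induction_on with
  | _ k ih =>
    intro hk
    have hpre : ∀ j < k, b j = b' j := fun j hj => ih j hj (hj.trans hk)
    have hpow : (3 : ℝ)⁻¹ ^ n ≤ 3⁻¹ ^ (k + 1) :=
      pow_le_pow_of_le_one (by norm_num) (by norm_num) hk
    cases hbk : b k <;> cases hbk' : b' k
    · rfl
    · have := pow_le_sub_of_first_diff (fun j hj => (hpre j hj).symm) hbk' hbk
      rw [abs_sub_comm] at h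
      linarith [le_abs_self (cantorMap b' - cantorMap b)]
    · have := pow_le_sub_of_first_diff hpre hbk hbk'
      linarith [le_abs_self (cantorMap b - cantorMap b')]
    · rfl

end cantorMap

open Real in
theorem tendsto_div_log_of_abs_sub_mul_log_le {f : ℝ → ℝ} {s K : ℝ}
    (hf : ∀ᶠ ε in 𝓝[>] 0, |f ε - s * log ε| ≤ K) :
    Tendsto (fun ε => f ε / log ε) (𝓝[>] 0) (𝓝 s) := by
  have hsmall : Tendsto (fun ε => (f ε - s * log ε) * (log ε)⁻¹) (𝓝[>] 0) (𝓝 0) :=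
    isBoundedUnder_le_mul_tendsto_zero (isBoundedUnder_of_eventually_le hf)
      (tendsto_inv_atBot_zero.comp tendsto_log_nhdsGT_zero)
  refine (by simpa using hsmall.const_add s : Tendsto _ _ (𝓝 s)).congr' ?_
  filter_upwards [tendsto_log_nhdsGT_zero.eventually (eventually_lt_atBot 0)] with ε hε
  rw [sub_mul, mul_inv_cancel_right₀ hε.ne]
  ring

open Real in
theorem tendsto_log_div_log_of_pow_bounds {m : ℝ → ℝ} {ρ p c : ℝ} (hρ₀ : 0 < ρ) (hρ₁ : ρ < 1)
    (hp₀ : 0 < p) (hp₁ : p ≤ 1) (hc : 0 < c)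
    (hlower : ∀ (n : ℕ) (ε : ℝ), ρ ^ n < ε → p ^ n ≤ m ε)
    (hupper : ∀ (n : ℕ) (ε : ℝ), 0 < ε → c * ε ≤ ρ ^ n → m ε ≤ p ^ n) :
    Tendsto (fun ε => log (m ε) / log ε) (𝓝[>] 0) (𝓝 (log p / log ρ)) := by
  set s := log p / log ρ
  have hlogρ : log ρ < 0 := log_neg hρ₀ hρ₁
  have hs : 0 ≤ s := div_nonneg_of_nonpos (log_nonpos hp₀.le hp₁) hlogρ.le
  have hpow : ∀ n : ℕ, log (p ^ n) = s * log (ρ ^ n) := fun n => by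
    simp only [log_pow, s]; field_simp [hlogρ.ne]
  refine tendsto_div_log_of_abs_sub_mul_log_le
    (K := max (-log p) (s * (log c - log ρ))) ?_
  filter_upwards [Ioo_mem_nhdsGT (show (0:ℝ) < min 1 c⁻¹ by positivity)] with ε ⟨hε₀, hε₁⟩
  obtain ⟨k, hk₁, hk₂⟩ := exists_nat_pow_near_of_lt_one hε₀ (hε₁.le.trans (min_le_left _ _))
    hρ₀ hρ₁
  obtain ⟨n, hn₁, hn₂⟩ := exists_nat_pow_near_of_lt_one (mul_pos hc hε₀)
    ((le_div_iff₀' hc).1 (by rw [one_div]; exact hε₁.le.trans (min_le_right _ _))) hρ₀ hρ₁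
  have hm₀ : 0 < m ε := (pow_pos hp₀ _).trans_le (hlower _ _ hk₁)
  have hlo : log p + s * log ε ≤ log (m ε) := calc
    log p + s * log ε ≤ log (p ^ (k + 1)) := by
      rw [pow_succ, log_mul (pow_pos hp₀ _).ne' hp₀.ne', hpow]
      linarith [mul_le_mul_of_nonneg_left (log_le_log hε₀ hk₂) hs]
    _ ≤ log (m ε) := log_le_log (pow_pos hp₀ _) (hlower _ _ hk₁)
  have hup : log (m ε) ≤ s * (log c - log ρ) + s * log ε := calc
    log (m ε) ≤ log (p ^ n) := log_le_log hm₀ (hupper _ _ hε₀ hn₂)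
    _ = s * (log (ρ ^ (n + 1)) - log ρ) := by
      rw [hpow, pow_succ, log_mul (pow_pos hρ₀ _).ne' hρ₀.ne']; ring
    _ ≤ s * (log c - log ρ) + s * log ε := by
      rw [← mul_add]
      refine mul_le_mul_of_nonneg_left ?_ hs
      linarith [log_lt_log (pow_pos hρ₀ _) hn₁, log_mul hc.ne' hε₀.ne']
  rw [abs_le]
  constructor <;> linarith [le_max_left (-log p) (s * (log c - log ρ)),
    le_max_right (-log p) (s * (log c - log ρ))]

theorem mem_of_forall_measure_ball_pos {α : Type*} [PseudoMetricSpace α] [MeasurableSpace α]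
    {μ : Measure α} {s : Set α} {x : α} (hs : IsClosed s) (hμ : μ sᶜ = 0)
    (hx : ∀ ε : ℝ, 0 < ε → 0 < μ (ball x ε)) : x ∈ s := by
  by_contra hxs
  obtain ⟨ε, hε, hball⟩ := Metric.isOpen_iff.1 hs.isOpen_compl x hxs
  exact (hx ε hε).ne' (measure_mono_null hball hμ)

section RandomDigits

variable {Ω : Type*} [MeasurableSpace Ω] {P : Measure Ω} {X : ℕ → Ω → Bool}

theorem measure_cylinder_eq (hindep : iIndepFun X P) (hfair : ∀ n c, P {ω | X n ω = c} = 2⁻¹)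
    (b : ℕ → Bool) (n : ℕ) : P {ω | ∀ k < n, X k ω = b k} = 2⁻¹ ^ n := by
  have hcyl : {ω | ∀ k < n, X k ω = b k} = ⋂ k ∈ Finset.range n, X k ⁻¹' {b k} := by
    ext ω; simp
  rw [hcyl, hindep.meas_biInter fun k _ => ⟨{b k}, trivial, rfl⟩]
  simp [Set.preimage, hfair]

lemma measurable_cantorMap_digits (hmeas : ∀ n, Measurable (X n)) :
    Measurable fun ω => cantorMap fun n => X n ω :=
  cantorMap.continuous.measurable.comp (measurable_pi_lambda _ hmeas)

theorem map_cantorMap_compl_range (hmeas : ∀ n, Measurable (X n)) :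
    P.map (fun ω => cantorMap fun n => X n ω) (Set.range cantorMap)ᶜ = 0 := by
  rw [Measure.map_apply (measurable_cantorMap_digits hmeas)
    (isCompact_range cantorMap.continuous).isClosed.measurableSet.compl]
  convert measure_empty (μ := P)
  ext ω
  simp

theorem pow_le_map_cantorMap_ball (hmeas : ∀ n, Measurable (X n)) (hindep : iIndepFun X P)
    (hfair : ∀ n c, P {ω | X n ω = c} = 2⁻¹) (b : ℕ → Bool) {n : ℕ} {ε : ℝ}
    (hε : 3⁻¹ ^ n < ε) :
    2⁻¹ ^ n ≤ P.map (fun ω => cantorMap fun n => X n ω) (ball (cantorMap b) ε) := by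
  rw [Measure.map_apply (measurable_cantorMap_digits hmeas) measurableSet_ball,
    ← measure_cylinder_eq hindep hfair b n]
  exact measure_mono fun ω hω => (cantorMap.abs_sub_le_of_eqOn hω).trans_lt hε

theorem map_cantorMap_ball_le_pow (hmeas : ∀ n, Measurable (X n)) (hindep : iIndepFun X P)
    (hfair : ∀ n c, P {ω | X n ω = c} = 2⁻¹) (x : ℝ) {n : ℕ} {ε : ℝ}
    (hε : 2 * ε ≤ 3⁻¹ ^ n) :
    P.map (fun ω => cantorMap fun n => X n ω) (ball x ε) ≤ 2⁻¹ ^ n := by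
  rw [Measure.map_apply (measurable_cantorMap_digits hmeas) measurableSet_ball]
  rcases Set.eq_empty_or_nonempty ((fun ω => cantorMap fun n => X n ω) ⁻¹' ball x ε) with
    h | ⟨ω₀, hω₀⟩
  · simp [h]
  rw [← measure_cylinder_eq hindep hfair (fun n => X n ω₀) n]
  refine measure_mono fun ω hω => cantorMap.eqOn_of_abs_sub_lt ?_
  calc _ ≤ dist (cantorMap fun n => X n ω) x + dist x (cantorMap fun n => X n ω₀) :=
        dist_triangle _ _ _
    _ < ε + ε := add_lt_add hω (mem_ball'.1 hω₀)
    _ = 2 * ε := by ring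
    _ ≤ _ := hε

end RandomDigits

/-- The Cantor measure, realized as the law of the random series `∑ 2·X_n·3^{-n}` for an
i.i.d. sequence of fair `{0,1}`-valued random variables, has pointwise dimension
`log 2 / log 3` at every point of its support. -/
theorem cantorMeasure_pointwiseDim
    {Ω : Type*} [MeasurableSpace Ω] (P : Measure Ω) [IsProbabilityMeasure P]
    (X : ℕ → Ω → Bool)
    (hmeas : ∀ n, Measurable (X n))
    (hindep : iIndepFun X P)
    (hfair : ∀ n, P {ω | X n ω = true} = 1/2 ∧ P {ω | X n ω = false} = 1/2)
    (ξ : Measure ℝ)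
    (hξ : ξ = P.map (fun ω => ∑' n : ℕ, 2 * ((X n ω).toNat : ℝ) / 3 ^ (n + 1)))
    (x : ℝ) (hx : ∀ ε : ℝ, 0 < ε → 0 < ξ (Metric.ball x ε)) :
    Tendsto (fun ε : ℝ => Real.log (ξ (Metric.ball x ε)).toReal / Real.log ε)
      (𝓝[>] 0) (𝓝 (Real.log 2 / Real.log 3)) := by
  change ξ = P.map (fun ω => cantorMap fun n => X n ω) at hξ
  subst hξ
  have hfair' : ∀ n c, P {ω | X n ω = c} = 2⁻¹ := fun n c => by
    cases c
    · simpa using (hfair n).2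
    · simpa using (hfair n).1
  obtain ⟨b, rfl⟩ : x ∈ Set.range cantorMap :=
    mem_of_forall_measure_ball_pos (isCompact_range cantorMap.continuous).isClosed
      (map_cantorMap_compl_range hmeas) hx
  have hlim := tendsto_log_div_log_of_pow_bounds (ρ := 3⁻¹) (p := 2⁻¹) (c := 2)
    (m := fun ε => (P.map (fun ω => cantorMap fun n => X n ω) (ball (cantorMap b) ε)).toReal)
    (by norm_num) (by norm_num) (by norm_num) (by norm_num) two_pos
    (fun n ε hε => by
      simpa using ENNReal.toReal_mono (measure_ne_top _ _)
        (pow_le_map_cantorMap_ball hmeas hindep hfair' b hε))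
    (fun n ε _ hε => by
      simpa using ENNReal.toReal_mono (by simp)
        (map_cantorMap_ball_le_pow hmeas hindep hfair' (cantorMap b) hε))
  rwa [Real.log_inv, Real.log_inv, neg_div_neg_eq] at hlim
end

section
/- Let μ be a Borel probability measure on ℝ^N, let (X_j)_{j≥1} be a sequence of independent ℝ^N-valued random variables each with law μ, and fix ε > 0. Then almost surely, the correlation sums C(E_n, ε) := (1/(n(n−1)))·Σ_{1≤i≠j≤n} 1[‖X_i − X_j‖ < ε] converge as n → ∞ to (μ ⊗ μ){(x,y) ∈ ℝ^N × ℝ^N : ‖x − y‖ < ε}, i.e., to the probability that ‖X_1 − X_2‖ < ε. -/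
/-!
The correlation sum is the U-statistic `S n = ∑_{i ≠ j < n} h (X i, X j)` of the bounded kernel
`h = 1[dist < ε]`, and `𝔼[S n] = n (n - 1) θ`. Summands indexed by disjoint pairs are independent,
so only `O(n³)` of the `n⁴` covariances survive and `Var[S n] = O(n³)`. Along the squares `n = k²`
the variances of `S n / n²` are `O(1 / k²)`, hence summable, and Chebyshev with Borel–Cantelli gives
almost sure convergence along that subsequence. Since `S` is monotone in `n` and consecutive
squares have ratio tending to `1`, the convergence extends to all `n`.
-/

open MeasureTheory Filter Topology ProbabilityTheory Finset

theorem Nat.tendsto_sqrt_atTop : Tendsto Nat.sqrt atTop atTop :=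
  tendsto_atTop_atTop.2 fun b => ⟨b ^ 2, fun _ hn => Nat.le_sqrt'.2 hn⟩

theorem tendsto_natCast_add_one_div_atTop :
    Tendsto (fun k : ℕ => ((k : ℝ) + 1) / k) atTop (𝓝 1) := by
  simpa using (tendsto_natCast_div_add_atTop (1 : ℝ)).inv₀ one_ne_zero

theorem tendsto_div_sq_of_monotone_of_tendsto_comp_sq {u : ℕ → ℝ} {l : ℝ} (hmono : Monotone u)
    (hnonneg : ∀ n, 0 ≤ u n)
    (h : Tendsto (fun k : ℕ => u (k ^ 2) / ((k ^ 2 : ℕ) : ℝ) ^ 2) atTop (𝓝 l)) :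
    Tendsto (fun n : ℕ => u n / (n : ℝ) ^ 2) atTop (𝓝 l) := by
  have hr : Tendsto (fun k : ℕ => (((k : ℝ) + 1) / k) ^ 4) atTop (𝓝 1) := by
    simpa using tendsto_natCast_add_one_div_atTop.pow 4
  have hlower := (h.div hr one_ne_zero).comp Nat.tendsto_sqrt_atTop
  have hupper := (((tendsto_add_atTop_iff_nat 1).2 h).mul hr).comp Nat.tendsto_sqrt_atTop
  rw [div_one] at hlower
  rw [mul_one] at hupper
  refine tendsto_of_tendsto_of_tendsto_of_le_of_le' hlower hupper ?_ ?_ <;>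
    filter_upwards [eventually_ge_atTop 1] with n hn <;>
    have hk : 0 < (n.sqrt : ℝ) := by exact_mod_cast Nat.sqrt_pos.2 hn
  · have hn' : (0 : ℝ) < n := by exact_mod_cast hn
    have hlt : (n : ℝ) ≤ ((n.sqrt : ℝ) + 1) ^ 2 := by
      exact_mod_cast (Nat.lt_succ_sqrt' n).le
    calc u (n.sqrt ^ 2) / ((n.sqrt ^ 2 : ℕ) : ℝ) ^ 2 / (((n.sqrt : ℝ) + 1) / n.sqrt) ^ 4
        = u (n.sqrt ^ 2) / (((n.sqrt : ℝ) + 1) ^ 2) ^ 2 := by push_cast; field_simp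
      _ ≤ u n / (n : ℝ) ^ 2 := by
        gcongr
        · exact hnonneg n
        · exact hmono (Nat.sqrt_le' n)
  · have hle : ((n.sqrt : ℝ)) ^ 2 ≤ n := by exact_mod_cast Nat.sqrt_le' n
    calc u n / (n : ℝ) ^ 2 ≤ u ((n.sqrt + 1) ^ 2) / ((n.sqrt : ℝ) ^ 2) ^ 2 := by
          gcongr
          · exact hnonneg _
          · exact hmono (Nat.lt_succ_sqrt' n).le
      _ = u ((n.sqrt + 1) ^ 2) / (((n.sqrt + 1) ^ 2 : ℕ) : ℝ) ^ 2 *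
            (((n.sqrt : ℝ) + 1) / n.sqrt) ^ 4 := by push_cast; field_simp

theorem tendsto_natCast_mul_sub_one_div_sq :
    Tendsto (fun n : ℕ => (n : ℝ) * (n - 1) / n ^ 2) atTop (𝓝 1) := by
  have h := (tendsto_const_nhds (x := (1 : ℝ))).sub tendsto_one_div_atTop_nhds_zero_nat
  rw [sub_zero] at h
  refine h.congr' ?_
  filter_upwards [eventually_ge_atTop 1] with n hn
  have : (n : ℝ) ≠ 0 := by positivity
  field_simp

theorem Finset.card_filter_offDiag_shares_coord_le {α : Type*} [DecidableEq α] (s : Finset α)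
    (p : α × α) :
    #{q ∈ s.offDiag | p.1 = q.1 ∨ p.1 = q.2 ∨ p.2 = q.1 ∨ p.2 = q.2} ≤ 4 * #s := by
  have hsub : {q ∈ s.offDiag | p.1 = q.1 ∨ p.1 = q.2 ∨ p.2 = q.1 ∨ p.2 = q.2} ⊆
      (({p.1} ×ˢ s ∪ s ×ˢ {p.1}) ∪ ({p.2} ×ˢ s ∪ s ×ˢ {p.2})) := by
    intro q hq
    simp only [mem_filter, mem_offDiag] at hq
    simp only [mem_union, mem_product, mem_singleton]
    grind
  calc _ ≤ _ := card_le_card hsub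
    _ ≤ #({p.1} ×ˢ s ∪ s ×ˢ {p.1}) + #({p.2} ×ˢ s ∪ s ×ˢ {p.2}) := card_union_le _ _
    _ ≤ (#({p.1} ×ˢ s) + #(s ×ˢ {p.1})) + (#({p.2} ×ˢ s) + #(s ×ˢ {p.2})) := by
      gcongr <;> exact card_union_le _ _
    _ = 4 * #s := by simp only [card_product, card_singleton]; ring

theorem Finset.sum_offDiag_eq_sum_sum_ite {α M : Type*} [DecidableEq α] [AddCommMonoid M]
    (s : Finset α) (f : α × α → M) :
    ∑ p ∈ s.offDiag, f p = ∑ i ∈ s, ∑ j ∈ s, if i ≠ j then f (i, j) else 0 := by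
  have : s.offDiag = {p ∈ s ×ˢ s | p.1 ≠ p.2} := by ext; simp [and_assoc]
  rw [this, sum_filter, sum_product]

namespace ProbabilityTheory

section Moments

variable {Ω : Type*} [MeasurableSpace Ω] {P : Measure Ω}

theorem ae_tendsto_sub_integral_of_summable_variance [IsFiniteMeasure P] {Y : ℕ → Ω → ℝ}
    (hY : ∀ k, MemLp (Y k) 2 P) (hsum : Summable fun k => Var[Y k; P]) :
    ∀ᵐ ω ∂P, Tendsto (fun k => Y k ω - P[Y k]) atTop (𝓝 0) := by
  have hδ : ∀ δ : ℝ, 0 < δ → ∀ᵐ ω ∂P, ∀ᶠ k in atTop, |Y k ω - P[Y k]| < δ := by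
    intro δ hδ
    have hfin : ∑' k, P {ω | δ ≤ |Y k ω - P[Y k]|} ≠ ⊤ := by
      refine ne_top_of_le_ne_top ?_
        (ENNReal.tsum_le_tsum fun k => meas_ge_le_variance_div_sq (hY k) hδ)
      rw [← ENNReal.ofReal_tsum_of_nonneg
        (fun k => div_nonneg (variance_nonneg _ _) (sq_nonneg δ)) (hsum.div_const _)]
      exact ENNReal.ofReal_ne_top
    filter_upwards [ae_eventually_notMem hfin] with ω hω
    filter_upwards [hω] with k hk
    simpa using hk
  filter_upwards [ae_all_iff.2 fun m : ℕ => hδ (1 / (m + 1)) (by positivity)] with ω hω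
  refine Metric.tendsto_nhds.2 fun ε hε => ?_
  obtain ⟨m, hm⟩ := exists_nat_one_div_lt hε
  filter_upwards [hω m] with k hk
  rw [Real.dist_eq, sub_zero]
  exact hk.trans hm

theorem abs_covariance_le_sq {X Y : Ω → ℝ} {C : ℝ} [IsProbabilityMeasure P]
    (hX : ∀ᵐ ω ∂P, X ω ∈ Set.Icc 0 C) (hY : ∀ᵐ ω ∂P, Y ω ∈ Set.Icc 0 C) :
    |cov[X, Y; P]| ≤ C ^ 2 := by
  have hdev : ∀ {Z : Ω → ℝ}, (∀ᵐ ω ∂P, Z ω ∈ Set.Icc 0 C) → ∀ᵐ ω ∂P, |Z ω - P[Z]| ≤ C := by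
    intro Z hZ
    have h0 : 0 ≤ P[Z] := integral_nonneg_of_ae (hZ.mono fun ω h => h.1)
    have h1 : P[Z] ≤ C := by
      simpa using integral_mono_of_nonneg (hZ.mono fun ω h => h.1) (integrable_const C)
        (hZ.mono fun ω h => h.2)
    filter_upwards [hZ] with ω hω
    exact abs_sub_le_iff.2 ⟨by linarith [hω.2], by linarith [hω.1]⟩
  have := norm_integral_le_of_norm_le_const (μ := P)
    (f := fun ω => (X ω - P[X]) * (Y ω - P[Y])) (C := C * C) <| by
    filter_upwards [hdev hX, hdev hY] with ω hXω hYω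
    rw [Real.norm_eq_abs, abs_mul]
    exact mul_le_mul hXω hYω (abs_nonneg _) ((abs_nonneg _).trans hXω)
  simpa [covariance, sq] using this

theorem variance_sum_le_of_indepFun {ι : Type*} (s : Finset ι) {Y : ι → Ω → ℝ} {C : ℝ}
    [IsProbabilityMeasure P] (R : ι → ι → Prop) [DecidableRel R]
    (hmeas : ∀ i, AEStronglyMeasurable (Y i) P) (hY : ∀ i, ∀ᵐ ω ∂P, Y i ω ∈ Set.Icc 0 C)
    (hindep : ∀ i j, ¬ R i j → IndepFun (Y i) (Y j) P) :
    Var[fun ω => ∑ i ∈ s, Y i ω; P] ≤ C ^ 2 * ∑ i ∈ s, (#{j ∈ s | R i j} : ℝ) := by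
  have hL2 : ∀ i, MemLp (Y i) 2 P := fun i => MemLp.of_bound (hmeas i) C <| by
    filter_upwards [hY i] with ω hω
    rw [Real.norm_eq_abs, abs_le]
    exact ⟨by linarith [hω.1, hω.2], hω.2⟩
  rw [variance_fun_sum' fun i _ => hL2 i, mul_sum]
  gcongr with i
  rw [card_filter, Nat.cast_sum, mul_sum]
  gcongr with j
  by_cases hij : R i j
  · simpa [hij] using (le_abs_self _).trans (abs_covariance_le_sq (hY i) (hY j))
  · simp [hij, (hindep i j hij).covariance_eq_zero (hL2 i) (hL2 j)]

end Moments

section OffDiagSum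

variable {Ω E : Type*} {X : ℕ → Ω → E} {h : E × E → ℝ}

def offDiagSum (h : E × E → ℝ) (X : ℕ → Ω → E) (n : ℕ) (ω : Ω) : ℝ :=
  ∑ p ∈ (range n).offDiag, h (X p.1 ω, X p.2 ω)

theorem monotone_offDiagSum (hh : ∀ z, 0 ≤ h z) (ω : Ω) :
    Monotone fun n => offDiagSum h X n ω := fun _ _ hmn =>
  sum_le_sum_of_subset_of_nonneg (offDiag_mono (range_mono hmn)) fun _ _ _ => hh _

theorem offDiagSum_nonneg (hh : ∀ z, 0 ≤ h z) (n : ℕ) (ω : Ω) : 0 ≤ offDiagSum h X n ω :=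
  sum_nonneg fun _ _ => hh _

variable [MeasurableSpace Ω] [MeasurableSpace E] {P : Measure Ω} {μ : Measure E} {C : ℝ}

theorem memLp_comp_prodMk [IsFiniteMeasure P] (hX : ∀ j, Measurable (X j)) (hh : Measurable h)
    (hbdd : ∀ z, h z ∈ Set.Icc 0 C) (q : ENNReal) (i j : ℕ) :
    MemLp (fun ω => h (X i ω, X j ω)) q P :=
  MemLp.of_bound (hh.comp ((hX i).prodMk (hX j))).aestronglyMeasurable C <|
    Eventually.of_forall fun _ => by
      rw [Real.norm_eq_abs, abs_of_nonneg (hbdd _).1]; exact (hbdd _).2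

theorem memLp_offDiagSum [IsFiniteMeasure P] (hX : ∀ j, Measurable (X j)) (hh : Measurable h)
    (hbdd : ∀ z, h z ∈ Set.Icc 0 C) (q : ENNReal) (n : ℕ) : MemLp (offDiagSum h X n) q P :=
  memLp_finsetSum _ fun p _ => memLp_comp_prodMk hX hh hbdd q p.1 p.2

theorem integral_comp_prodMk [IsProbabilityMeasure P] (hX : ∀ j, Measurable (X j))
    (hindep : iIndepFun X P) (hlaw : ∀ j, P.map (X j) = μ) (hh : Measurable h)
    {i j : ℕ} (hij : i ≠ j) :
    ∫ ω, h (X i ω, X j ω) ∂P = ∫ z, h z ∂(μ.prod μ) := by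
  have hmap : P.map (fun ω => (X i ω, X j ω)) = μ.prod μ := by
    rw [(indepFun_iff_map_prod_eq_prod_map_map (hX i).aemeasurable (hX j).aemeasurable).1
      (hindep.indepFun hij), hlaw i, hlaw j]
  rw [← hmap, integral_map ((hX i).prodMk (hX j)).aemeasurable hh.aestronglyMeasurable]

theorem integral_offDiagSum [IsProbabilityMeasure P] (hX : ∀ j, Measurable (X j))
    (hindep : iIndepFun X P) (hlaw : ∀ j, P.map (X j) = μ) (hh : Measurable h)
    (hbdd : ∀ z, h z ∈ Set.Icc 0 C) (n : ℕ) :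
    P[offDiagSum h X n] = n * (n - 1) * ∫ z, h z ∂(μ.prod μ) := by
  unfold offDiagSum
  rw [integral_finsetSum _ fun p _ => (memLp_comp_prodMk hX hh hbdd 1 p.1 p.2).integrable le_rfl,
    sum_congr rfl fun p hp => integral_comp_prodMk hX hindep hlaw hh (mem_offDiag.1 hp).2.2,
    sum_const, offDiag_card, card_range, nsmul_eq_mul,
    Nat.cast_sub (Nat.le_mul_self n), Nat.cast_mul]
  ring

theorem variance_offDiagSum_le [IsProbabilityMeasure P] (hX : ∀ j, Measurable (X j))
    (hindep : iIndepFun X P) (hh : Measurable h) (hbdd : ∀ z, h z ∈ Set.Icc 0 C) (n : ℕ) :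
    Var[offDiagSum h X n; P] ≤ 4 * C ^ 2 * n ^ 3 := by
  have hvar := variance_sum_le_of_indepFun (P := P) (range n).offDiag
    (Y := fun p ω => h (X p.1 ω, X p.2 ω)) (C := C)
    (fun p q => p.1 = q.1 ∨ p.1 = q.2 ∨ p.2 = q.1 ∨ p.2 = q.2)
    (fun p => (memLp_comp_prodMk hX hh hbdd 1 p.1 p.2).aestronglyMeasurable)
    (fun p => Eventually.of_forall fun _ => hbdd _) fun p q hpq => by
      push Not at hpq
      exact (hindep.indepFun_prodMk_prodMk hX p.1 p.2 q.1 q.2 hpq.1 hpq.2.1 hpq.2.2.1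
        hpq.2.2.2).comp hh hh
  have hcount : ∑ p ∈ (range n).offDiag,
      (#{q ∈ (range n).offDiag | p.1 = q.1 ∨ p.1 = q.2 ∨ p.2 = q.1 ∨ p.2 = q.2} : ℝ) ≤
      4 * n ^ 3 := by
    calc _ ≤ ∑ p ∈ (range n).offDiag, (4 * n : ℝ) := by
          gcongr with p
          exact_mod_cast (card_range n ▸ card_filter_offDiag_shares_coord_le (range n) p)
      _ ≤ (n * n : ℕ) * (4 * n : ℝ) := by
          rw [sum_const, nsmul_eq_mul]
          gcongr
          have : #(range n).offDiag ≤ n * n := by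
            rw [offDiag_card, card_range]; exact Nat.sub_le _ _
          exact_mod_cast this
      _ = 4 * n ^ 3 := by push_cast; ring
  calc Var[offDiagSum h X n; P] ≤ _ := hvar
    _ ≤ C ^ 2 * (4 * n ^ 3) := by gcongr
    _ = 4 * C ^ 2 * n ^ 3 := by ring

theorem ae_tendsto_offDiagSum_sq_div [IsProbabilityMeasure P] (hX : ∀ j, Measurable (X j))
    (hindep : iIndepFun X P) (hlaw : ∀ j, P.map (X j) = μ) (hh : Measurable h)
    (hbdd : ∀ z, h z ∈ Set.Icc 0 C) :
    ∀ᵐ ω ∂P, Tendsto (fun k : ℕ => offDiagSum h X (k ^ 2) ω / ((k ^ 2 : ℕ) : ℝ) ^ 2) atTop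
      (𝓝 (∫ z, h z ∂(μ.prod μ))) := by
  set Y : ℕ → Ω → ℝ := fun k ω => offDiagSum h X (k ^ 2) ω / ((k ^ 2 : ℕ) : ℝ) ^ 2
  have hL2 : ∀ k, MemLp (Y k) 2 P := fun k => by
    simpa only [Y, div_eq_mul_inv] using (memLp_offDiagSum hX hh hbdd 2 _).mul_const _
  have hvar : ∀ k : ℕ, Var[Y k; P] ≤ 4 * C ^ 2 * (1 / (k : ℝ) ^ 2) := by
    intro k
    obtain rfl | hk := k.eq_zero_or_pos
    · simp [Y, ← Pi.zero_def, variance_zero]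
    have hk' : (k : ℝ) ≠ 0 := by positivity
    calc Var[Y k; P] = Var[offDiagSum h X (k ^ 2); P] / ((k : ℝ) ^ 4) ^ 2 := by
          simp only [Y, div_eq_mul_inv, variance_mul_const]
          push_cast; ring
      _ ≤ 4 * C ^ 2 * ((k : ℝ) ^ 2) ^ 3 / ((k : ℝ) ^ 4) ^ 2 := by
          gcongr
          exact_mod_cast variance_offDiagSum_le hX hindep hh hbdd (k ^ 2)
      _ = 4 * C ^ 2 * (1 / (k : ℝ) ^ 2) := by field_simp
  have hsum : Summable fun k => Var[Y k; P] :=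
    ((Real.summable_one_div_nat_pow.2 one_lt_two).mul_left _).of_nonneg_of_le
      (fun k => variance_nonneg _ _) hvar
  have hmean : Tendsto (fun k => P[Y k]) atTop (𝓝 (∫ z, h z ∂(μ.prod μ))) := by
    have := (tendsto_natCast_mul_sub_one_div_sq.comp (tendsto_pow_atTop two_ne_zero)).mul_const
      (∫ z, h z ∂(μ.prod μ))
    rw [one_mul] at this
    refine this.congr fun k => ?_
    simp only [Y, Function.comp, integral_div, integral_offDiagSum hX hindep hlaw hh hbdd]
    ring
  filter_upwards [ae_tendsto_sub_integral_of_summable_variance hL2 hsum] with ω hω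
  simpa only [sub_add_cancel, zero_add] using hω.add hmean

theorem ae_tendsto_offDiagSum_div [IsProbabilityMeasure P] (hX : ∀ j, Measurable (X j))
    (hindep : iIndepFun X P) (hlaw : ∀ j, P.map (X j) = μ) (hh : Measurable h)
    (hbdd : ∀ z, h z ∈ Set.Icc 0 C) :
    ∀ᵐ ω ∂P, Tendsto (fun n : ℕ => offDiagSum h X n ω / (n * (n - 1))) atTop
      (𝓝 (∫ z, h z ∂(μ.prod μ))) := by
  filter_upwards [ae_tendsto_offDiagSum_sq_div hX hindep hlaw hh hbdd] with ω hω
  have hnonneg : ∀ z, 0 ≤ h z := fun z => (hbdd z).1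
  have hsq := tendsto_div_sq_of_monotone_of_tendsto_comp_sq (monotone_offDiagSum hnonneg ω)
    (fun n => offDiagSum_nonneg hnonneg n ω) hω
  have := hsq.div tendsto_natCast_mul_sub_one_div_sq one_ne_zero
  rw [div_one] at this
  refine this.congr' ?_
  filter_upwards [eventually_ge_atTop 2] with n hn
  have h0 : (n : ℝ) ≠ 0 := by positivity
  have h1 : (n : ℝ) - 1 ≠ 0 := by
    have : (2 : ℝ) ≤ n := by exact_mod_cast hn
    linarith
  simp only [Pi.div_apply]
  field_simp

end OffDiagSum

end ProbabilityTheory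

theorem correlationSum_tendsto_correlationIntegral_general
    {N : ℕ} {Ω : Type*} [MeasurableSpace Ω] (P : Measure Ω) [IsProbabilityMeasure P]
    (μ : Measure (EuclideanSpace ℝ (Fin N)))
    (X : ℕ → Ω → EuclideanSpace ℝ (Fin N))
    (hmeas : ∀ j, Measurable (X j))
    (hindep : iIndepFun X P)
    (hlaw : ∀ j, P.map (X j) = μ)
    (ε : ℝ) :
    ∀ᵐ ω ∂P, Tendsto
      (fun n : ℕ => (1 / ((n : ℝ) * ((n : ℝ) - 1))) *
        ∑ i ∈ Finset.range n, ∑ j ∈ Finset.range n,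
          if i ≠ j ∧ dist (X i ω) (X j ω) < ε then (1 : ℝ) else 0)
      atTop
      (𝓝 ((μ.prod μ) {q : EuclideanSpace ℝ (Fin N) × EuclideanSpace ℝ (Fin N) |
        dist q.1 q.2 < ε}).toReal) := by
  set A : Set (EuclideanSpace ℝ (Fin N) × EuclideanSpace ℝ (Fin N)) := {q | dist q.1 q.2 < ε}
  have hA : MeasurableSet A := (isOpen_lt continuous_dist continuous_const).measurableSet
  have hbdd : ∀ z, A.indicator 1 z ∈ Set.Icc (0 : ℝ) 1 := fun z => by
    by_cases hz : z ∈ A <;> simp [hz]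
  have key := ae_tendsto_offDiagSum_div hmeas hindep hlaw (measurable_one.indicator hA) hbdd
  rw [integral_indicator_one hA] at key
  filter_upwards [key] with ω hω
  refine hω.congr fun n => ?_
  rw [offDiagSum, sum_offDiag_eq_sum_sum_ite, one_div_mul_eq_div]
  congr 1
  refine sum_congr rfl fun i _ => sum_congr rfl fun j _ => ?_
  by_cases hij : i = j <;> by_cases hd : dist (X i ω) (X j ω) < ε <;> simp [A, hij, hd]

/-- Strong law for correlation sums: if `(X_j)` is an i.i.d. sequence with law `μ` on `ℝ^N`
and `ε > 0`, then almost surely the correlation sums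
`C(E_n, ε) = (1/(n(n-1))) ∑_{i ≠ j < n} 1[‖X_i - X_j‖ < ε]`
converge to `(μ ⊗ μ){(x,y) : ‖x - y‖ < ε}`. -/
theorem correlationSum_tendsto_correlationIntegral
    {N : ℕ} {Ω : Type*} [MeasurableSpace Ω] (P : Measure Ω) [IsProbabilityMeasure P]
    (μ : Measure (EuclideanSpace ℝ (Fin N))) [IsProbabilityMeasure μ]
    (X : ℕ → Ω → EuclideanSpace ℝ (Fin N))
    (hmeas : ∀ j, Measurable (X j))
    (hindep : iIndepFun X P)
    (hlaw : ∀ j, P.map (X j) = μ)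
    (ε : ℝ) (hε : 0 < ε) :
    ∀ᵐ ω ∂P, Tendsto
      (fun n : ℕ => (1 / ((n : ℝ) * ((n : ℝ) - 1))) *
        ∑ i ∈ Finset.range n, ∑ j ∈ Finset.range n,
          if i ≠ j ∧ dist (X i ω) (X j ω) < ε then (1 : ℝ) else 0)
      atTop
      (𝓝 ((μ.prod μ) {q : EuclideanSpace ℝ (Fin N) × EuclideanSpace ℝ (Fin N) |
        dist q.1 q.2 < ε}).toReal) :=
  correlationSum_tendsto_correlationIntegral_general P μ X hmeas hindep hlaw ε
end

section
/- Let μ₁ and μ₂ be Borel probability measures on ℝ^N whose supports are at Euclidean distance greater than s for some s > 0, let θ ∈ [0,1], and let μ = θ·μ₁ + (1−θ)·μ₂. Then for every ε with 0 < ε ≤ s, C(μ,ε) = θ²·C(μ₁,ε) + (1−θ)²·C(μ₂,ε). -/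
open MeasureTheory Filter Metric Topology ENNReal

/-- The support of a measure on a metric space: points all of whose balls have positive mass. -/
def measSupport {X : Type*} [MetricSpace X] [MeasurableSpace X] (μ : Measure X) : Set X :=
  {x | ∀ ε : ℝ, 0 < ε → 0 < μ (Metric.ball x ε)}

/-- The correlation integral `C(μ,ε) = (μ ⊗ μ){(x,y) : ‖x - y‖ < ε}`. -/
noncomputable def corrIntegral {N : ℕ} (μ : Measure (EuclideanSpace ℝ (Fin N))) (ε : ℝ) :
    ℝ≥0∞ :=
  (μ.prod μ) {q : EuclideanSpace ℝ (Fin N) × EuclideanSpace ℝ (Fin N) | dist q.1 q.2 < ε}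

/-! Since the supports are more than `ε` apart, the set `{dist < ε}` misses
`supp μ₁ × supp μ₂`, which is conull for `μ₁ ⊗ μ₂` (supports are conull in a second-countable
space); so it is null for both cross products `μ₁ ⊗ μ₂` and `μ₂ ⊗ μ₁`.
Expanding `(θ μ₁ + (1-θ) μ₂) ⊗ (θ μ₁ + (1-θ) μ₂)` bilinearly leaves only the two diagonal terms. -/

section Support

variable {X : Type*} [MetricSpace X] [MeasurableSpace X]

theorem measSupport_eq_support (μ : Measure X) : measSupport μ = μ.support := by
  ext x
  rw [Measure.mem_support_iff_forall, nhds_basis_ball.forall_iff fun _ _ hUV h ↦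
    h.trans_le (measure_mono hUV)]
  rfl

theorem measure_compl_measSupport [SecondCountableTopology X] (μ : Measure X) :
    μ (measSupport μ)ᶜ = 0 := by
  rw [measSupport_eq_support]
  exact Measure.measure_compl_support

theorem prod_compl_measSupport_prod [SecondCountableTopology X] (μ ν : Measure X)
    [SFinite ν] : (μ.prod ν) (measSupport μ ×ˢ measSupport ν)ᶜ = 0 := by
  rw [Set.compl_prod_eq_union]
  refine measure_union_null ?_ ?_
  · rw [Measure.prod_prod, measure_compl_measSupport, zero_mul]
  · rw [Measure.prod_prod, measure_compl_measSupport, mul_zero]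

theorem prod_setOf_dist_lt_eq_zero [SecondCountableTopology X] (μ ν : Measure X)
    [SFinite ν] {ε : ℝ} (hsep : ∀ x ∈ measSupport μ, ∀ y ∈ measSupport ν, ε ≤ dist x y) :
    (μ.prod ν) {q : X × X | dist q.1 q.2 < ε} = 0 := by
  refine measure_mono_null ?_ (prod_compl_measSupport_prod μ ν)
  intro q (hq : dist q.1 q.2 < ε) hmem
  exact (hq.trans_le (hsep q.1 hmem.1 q.2 hmem.2)).false

end Support

theorem add_smul_prod_self_apply_of_cross_null {α : Type*} [MeasurableSpace α]
    (μ₁ μ₂ : Measure α) [SFinite μ₁] [SFinite μ₂] (a b : ℝ≥0∞) {D : Set (α × α)}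
    (h₁₂ : (μ₁.prod μ₂) D = 0) (h₂₁ : (μ₂.prod μ₁) D = 0) :
    ((a • μ₁ + b • μ₂).prod (a • μ₁ + b • μ₂)) D
      = a ^ 2 * (μ₁.prod μ₁) D + b ^ 2 * (μ₂.prod μ₂) D := by
  simp only [Measure.prod_add, Measure.add_prod, Measure.prod_smul_left, Measure.prod_smul_right,
    Measure.add_apply, Measure.smul_apply, smul_eq_mul, h₁₂, h₂₁]
  ring

theorem corrIntegral_mixture_general {N : ℕ}
    (μ₁ μ₂ : Measure (EuclideanSpace ℝ (Fin N)))
    [IsProbabilityMeasure μ₁] [IsProbabilityMeasure μ₂]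
    (s : ℝ)
    (hsep : ∀ x ∈ measSupport μ₁, ∀ y ∈ measSupport μ₂, s < dist x y)
    (θ : ℝ) (hθ : θ ∈ Set.Icc (0:ℝ) 1)
    (ε : ℝ) (hεs : ε ≤ s) :
    corrIntegral (ENNReal.ofReal θ • μ₁ + ENNReal.ofReal (1 - θ) • μ₂) ε
      = ENNReal.ofReal (θ ^ 2) * corrIntegral μ₁ ε
        + ENNReal.ofReal ((1 - θ) ^ 2) * corrIntegral μ₂ ε := by
  have h₁₂ : ∀ x ∈ measSupport μ₁, ∀ y ∈ measSupport μ₂, ε ≤ dist x y :=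
    fun x hx y hy ↦ hεs.trans (hsep x hx y hy).le
  have h₂₁ : ∀ y ∈ measSupport μ₂, ∀ x ∈ measSupport μ₁, ε ≤ dist y x :=
    fun y hy x hx ↦ dist_comm x y ▸ h₁₂ x hx y hy
  rw [corrIntegral, add_smul_prod_self_apply_of_cross_null μ₁ μ₂ _ _
    (prod_setOf_dist_lt_eq_zero μ₁ μ₂ h₁₂) (prod_setOf_dist_lt_eq_zero μ₂ μ₁ h₂₁),
    ENNReal.ofReal_pow hθ.1, ENNReal.ofReal_pow (sub_nonneg.2 hθ.2), corrIntegral, corrIntegral]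

/-- If the supports of `μ₁` and `μ₂` are at distance greater than `s > 0`, then for
`0 < ε ≤ s` the correlation integral of the mixture `θ·μ₁ + (1-θ)·μ₂` is
`θ²·C(μ₁,ε) + (1-θ)²·C(μ₂,ε)`. -/
theorem corrIntegral_mixture {N : ℕ}
    (μ₁ μ₂ : Measure (EuclideanSpace ℝ (Fin N)))
    [IsProbabilityMeasure μ₁] [IsProbabilityMeasure μ₂]
    (s : ℝ) (hs : 0 < s)
    (hsep : ∀ x ∈ measSupport μ₁, ∀ y ∈ measSupport μ₂, s < dist x y)
    (θ : ℝ) (hθ : θ ∈ Set.Icc (0:ℝ) 1)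
    (ε : ℝ) (hε : 0 < ε) (hεs : ε ≤ s) :
    corrIntegral (ENNReal.ofReal θ • μ₁ + ENNReal.ofReal (1 - θ) • μ₂) ε
      = ENNReal.ofReal (θ ^ 2) * corrIntegral μ₁ ε
        + ENNReal.ofReal ((1 - θ) ^ 2) * corrIntegral μ₂ ε :=
  corrIntegral_mixture_general μ₁ μ₂ s hsep θ hθ ε hεs
end

section
/- Let α₁ < α₂ be nonnegative reals and let μ₁, μ₂ be Borel probability measures on ℝ^N whose supports are at Euclidean distance greater than some s > 0, and suppose for each i = 1, 2 there exist constants c_i, C_i > 0 and ε_i > 0 such that c_i·ε^{α_i} ≤ μ_i(B(x,ε)) ≤ C_i·ε^{α_i} for all x in the support of μ_i and all 0 < ε < ε_i. Then the mixture μ = (1/2)·μ₁ + (1/2)·μ₂ has correlation dimension D_C(μ) = lim_{ε→0⁺} log C(μ,ε)/log ε = α₁, the smaller of the two exponents (dimension blindness of correlation dimension). -/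
open MeasureTheory Filter Metric Topology ENNReal

/-!
For `ε` below the separation distance, a ball about a point of one support carries no mass of the
other component, so the correlation integral of the mixture splits as
`C(μ,ε) = (C(μ₁,ε) + C(μ₂,ε)) / 4`. The uniform ball estimates give `C(μᵢ,ε) ≍ ε^αᵢ`, and since
`ε^α₂ ≤ ε^α₁` for `ε ≤ 1`, the sum is `≍ ε^α₁`; the constants disappear after dividing the
logarithm by `log ε → -∞`.
-/

namespace Real

theorem tendsto_log_div_log_of_rpow_bounds {α a b : ℝ} (ha : 0 < a) (hb : 0 < b) {f : ℝ → ℝ}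
    (hf : ∀ᶠ ε in 𝓝[>] 0, a * ε ^ α ≤ f ε ∧ f ε ≤ b * ε ^ α) :
    Tendsto (fun ε => log (f ε) / log ε) (𝓝[>] 0) (𝓝 α) := by
  have hlim (c : ℝ) : Tendsto (fun ε => α + log c / log ε) (𝓝[>] 0) (𝓝 α) := by
    simpa using tendsto_const_nhds.add (tendsto_const_nhds.div_atBot tendsto_log_nhdsGT_zero)
  have hlog_rpow {c ε : ℝ} (hc : 0 < c) (hε : 0 < ε) (hlog : log ε ≠ 0) :
      log (c * ε ^ α) / log ε = α + log c / log ε := by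
    rw [log_mul hc.ne' (rpow_pos_of_pos hε α).ne', log_rpow hε]
    field_simp
    ring
  have hsmall : ∀ᶠ ε in 𝓝[>] (0 : ℝ), ε ∈ Set.Ioo 0 1 := Ioo_mem_nhdsGT one_pos
  refine tendsto_of_tendsto_of_tendsto_of_le_of_le' (hlim b) (hlim a) ?_ ?_
  · filter_upwards [hf, hsmall] with ε ⟨hlo, hhi⟩ ⟨hε, hε1⟩
    have hlog := log_neg hε hε1
    rw [← hlog_rpow hb hε hlog.ne]
    exact div_le_div_of_nonpos_of_le hlog.le
      (log_le_log (lt_of_lt_of_le (by positivity) hlo) hhi)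
  · filter_upwards [hf, hsmall] with ε ⟨hlo, _⟩ ⟨hε, hε1⟩
    have hlog := log_neg hε hε1
    rw [← hlog_rpow ha hε hlog.ne]
    exact div_le_div_of_nonpos_of_le hlog.le (log_le_log (by positivity) hlo)

end Real

section Support

variable {X : Type*} [MetricSpace X] [MeasurableSpace X]

theorem ae_mem_measSupport [HereditarilyLindelofSpace X] (μ : Measure X) :
    ∀ᵐ x ∂μ, x ∈ measSupport μ := by
  rw [measSupport_eq_support]
  exact Measure.support_mem_ae

theorem measure_ball_eq_zero_of_lt_dist [HereditarilyLindelofSpace X] {μ : Measure X} {x : X}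
    {s ε : ℝ} (h : ∀ y ∈ measSupport μ, s < dist x y) (hε : ε ≤ s) : μ (ball x ε) = 0 := by
  refine measure_mono_null (t := (measSupport μ)ᶜ) (fun y hy hyμ => ?_) ?_
  · have := h y hyμ
    rw [mem_ball, dist_comm] at hy
    linarith
  · rw [measSupport_eq_support]
    exact Measure.measure_compl_support

end Support

section CorrIntegral

variable {N : ℕ}

theorem corrIntegral_eq_lintegral (μ : Measure (EuclideanSpace ℝ (Fin N))) [SFinite μ] (ε : ℝ) :
    corrIntegral μ ε = ∫⁻ x, μ (ball x ε) ∂μ := by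
  have hopen : IsOpen {q : EuclideanSpace ℝ (Fin N) × EuclideanSpace ℝ (Fin N) |
      dist q.1 q.2 < ε} := isOpen_lt continuous_dist continuous_const
  rw [corrIntegral, Measure.prod_apply hopen.measurableSet]
  congr! with x
  ext y
  simp [dist_comm]

theorem corrIntegral_ne_top (μ : Measure (EuclideanSpace ℝ (Fin N))) [IsFiniteMeasure μ]
    (ε : ℝ) : corrIntegral μ ε ≠ ∞ :=
  measure_ne_top _ _

theorem corrIntegral_toReal_bounds (μ : Measure (EuclideanSpace ℝ (Fin N)))
    [IsProbabilityMeasure μ] {ε lo hi : ℝ} (hhi : 0 ≤ hi)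
    (hball : ∀ x ∈ measSupport μ,
      ENNReal.ofReal lo ≤ μ (ball x ε) ∧ μ (ball x ε) ≤ ENNReal.ofReal hi) :
    lo ≤ (corrIntegral μ ε).toReal ∧ (corrIntegral μ ε).toReal ≤ hi := by
  have hae := ae_mem_measSupport μ
  constructor
  · rw [← ENNReal.ofReal_le_iff_le_toReal (corrIntegral_ne_top μ ε)]
    calc ENNReal.ofReal lo = ∫⁻ _, ENNReal.ofReal lo ∂μ := by simp
      _ ≤ corrIntegral μ ε := by
        rw [corrIntegral_eq_lintegral]
        exact lintegral_mono_ae (hae.mono fun x hx => (hball x hx).1)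
  · refine ENNReal.toReal_le_of_le_ofReal hhi ?_
    calc corrIntegral μ ε ≤ ∫⁻ _, ENNReal.ofReal hi ∂μ := by
          rw [corrIntegral_eq_lintegral]
          exact lintegral_mono_ae (hae.mono fun x hx => (hball x hx).2)
      _ = ENNReal.ofReal hi := by simp

theorem corrIntegral_smul_add_smul_of_separated {a b : ℝ≥0∞} (ha : a ≠ ∞) (hb : b ≠ ∞)
    (μ₁ μ₂ : Measure (EuclideanSpace ℝ (Fin N))) [SFinite μ₁] [SFinite μ₂] {s ε : ℝ}
    (hsep : ∀ x ∈ measSupport μ₁, ∀ y ∈ measSupport μ₂, s < dist x y) (hε : ε ≤ s) :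
    corrIntegral (a • μ₁ + b • μ₂) ε = a ^ 2 * corrIntegral μ₁ ε + b ^ 2 * corrIntegral μ₂ ε := by
  have h₁ : ∀ᵐ x ∂μ₁, (a • μ₁ + b • μ₂) (ball x ε) = a * μ₁ (ball x ε) := by
    filter_upwards [ae_mem_measSupport μ₁] with x hx
    simp [measure_ball_eq_zero_of_lt_dist (hsep x hx) hε]
  have h₂ : ∀ᵐ x ∂μ₂, (a • μ₁ + b • μ₂) (ball x ε) = b * μ₂ (ball x ε) := by
    filter_upwards [ae_mem_measSupport μ₂] with x hx
    have hsep' : ∀ y ∈ measSupport μ₁, s < dist x y := fun y hy => dist_comm y x ▸ hsep y hy x hx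
    simp [measure_ball_eq_zero_of_lt_dist hsep' hε]
  rw [corrIntegral_eq_lintegral, lintegral_add_measure, lintegral_smul_measure,
    lintegral_smul_measure, lintegral_congr_ae h₁, lintegral_congr_ae h₂,
    lintegral_const_mul' _ _ ha, lintegral_const_mul' _ _ hb, ← corrIntegral_eq_lintegral,
    ← corrIntegral_eq_lintegral, smul_eq_mul, smul_eq_mul, ← mul_assoc, ← mul_assoc, sq, sq]

end CorrIntegral

theorem correlationDim_mixture_eq_min_general {N : ℕ} (α₁ α₂ : ℝ) (hα : α₁ < α₂)
    (μ₁ μ₂ : Measure (EuclideanSpace ℝ (Fin N)))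
    [IsProbabilityMeasure μ₁] [IsProbabilityMeasure μ₂]
    (s : ℝ) (hs : 0 < s)
    (hsep : ∀ x ∈ measSupport μ₁, ∀ y ∈ measSupport μ₂, s < dist x y)
    (c₁ C₁ ε₁ : ℝ) (hc₁ : 0 < c₁) (hC₁ : 0 < C₁) (hε₁ : 0 < ε₁)
    (hball₁ : ∀ x ∈ measSupport μ₁, ∀ ε : ℝ, 0 < ε → ε < ε₁ →
      ENNReal.ofReal (c₁ * ε ^ α₁) ≤ μ₁ (Metric.ball x ε) ∧
      μ₁ (Metric.ball x ε) ≤ ENNReal.ofReal (C₁ * ε ^ α₁))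
    (c₂ C₂ ε₂ : ℝ) (hC₂ : 0 < C₂) (hε₂ : 0 < ε₂)
    (hball₂ : ∀ x ∈ measSupport μ₂, ∀ ε : ℝ, 0 < ε → ε < ε₂ →
      ENNReal.ofReal (c₂ * ε ^ α₂) ≤ μ₂ (Metric.ball x ε) ∧
      μ₂ (Metric.ball x ε) ≤ ENNReal.ofReal (C₂ * ε ^ α₂)) :
    Tendsto (fun ε : ℝ =>
        Real.log (corrIntegral ((1/2 : ℝ≥0∞) • μ₁ + (1/2 : ℝ≥0∞) • μ₂) ε).toReal / Real.log ε)
      (𝓝[>] 0) (𝓝 α₁) := by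
  refine Real.tendsto_log_div_log_of_rpow_bounds (a := c₁ / 4) (b := (C₁ + C₂) / 4)
    (by positivity) (by positivity) ?_
  filter_upwards [Ioo_mem_nhdsGT one_pos, Ioo_mem_nhdsGT hs, Ioo_mem_nhdsGT hε₁,
    Ioo_mem_nhdsGT hε₂] with ε ⟨hε, hε1⟩ ⟨_, hεs⟩ ⟨_, hεε₁⟩ ⟨_, hεε₂⟩
  have hmix : (corrIntegral ((1/2 : ℝ≥0∞) • μ₁ + (1/2 : ℝ≥0∞) • μ₂) ε).toReal =
      ((corrIntegral μ₁ ε).toReal + (corrIntegral μ₂ ε).toReal) / 4 := by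
    rw [corrIntegral_smul_add_smul_of_separated (by simp) (by simp) μ₁ μ₂ hsep hεs.le,
      ENNReal.toReal_add (mul_ne_top (by simp) (corrIntegral_ne_top μ₁ ε))
        (mul_ne_top (by simp) (corrIntegral_ne_top μ₂ ε))]
    simp only [one_div, toReal_mul, toReal_pow, toReal_inv, toReal_ofNat, inv_pow]
    ring
  obtain ⟨hlo₁, hhi₁⟩ := corrIntegral_toReal_bounds μ₁ (by positivity)
    fun x hx => hball₁ x hx ε hε hεε₁
  obtain ⟨-, hhi₂⟩ := corrIntegral_toReal_bounds μ₂ (by positivity)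
    fun x hx => hball₂ x hx ε hε hεε₂
  have hpow : ε ^ α₂ ≤ ε ^ α₁ := Real.rpow_le_rpow_of_exponent_ge hε hε1.le hα.le
  rw [hmix]
  constructor
  · nlinarith [ENNReal.toReal_nonneg (a := corrIntegral μ₂ ε)]
  · nlinarith [mul_le_mul_of_nonneg_left hpow hC₂.le]

/-- Dimension blindness of correlation dimension: a mixture `μ = (1/2)μ₁ + (1/2)μ₂` of measures
with separated supports and uniform scaling exponents `α₁ < α₂` has correlation dimension `α₁`,
the smaller of the two exponents. -/
theorem correlationDim_mixture_eq_min {N : ℕ} (α₁ α₂ : ℝ) (hα₁ : 0 ≤ α₁) (hα : α₁ < α₂)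
    (μ₁ μ₂ : Measure (EuclideanSpace ℝ (Fin N)))
    [IsProbabilityMeasure μ₁] [IsProbabilityMeasure μ₂]
    (s : ℝ) (hs : 0 < s)
    (hsep : ∀ x ∈ measSupport μ₁, ∀ y ∈ measSupport μ₂, s < dist x y)
    (c₁ C₁ ε₁ : ℝ) (hc₁ : 0 < c₁) (hC₁ : 0 < C₁) (hε₁ : 0 < ε₁)
    (hball₁ : ∀ x ∈ measSupport μ₁, ∀ ε : ℝ, 0 < ε → ε < ε₁ →
      ENNReal.ofReal (c₁ * ε ^ α₁) ≤ μ₁ (Metric.ball x ε) ∧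
      μ₁ (Metric.ball x ε) ≤ ENNReal.ofReal (C₁ * ε ^ α₁))
    (c₂ C₂ ε₂ : ℝ) (hc₂ : 0 < c₂) (hC₂ : 0 < C₂) (hε₂ : 0 < ε₂)
    (hball₂ : ∀ x ∈ measSupport μ₂, ∀ ε : ℝ, 0 < ε → ε < ε₂ →
      ENNReal.ofReal (c₂ * ε ^ α₂) ≤ μ₂ (Metric.ball x ε) ∧
      μ₂ (Metric.ball x ε) ≤ ENNReal.ofReal (C₂ * ε ^ α₂)) :
    Tendsto (fun ε : ℝ =>
        Real.log (corrIntegral ((1/2 : ℝ≥0∞) • μ₁ + (1/2 : ℝ≥0∞) • μ₂) ε).toReal / Real.log ε)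
      (𝓝[>] 0) (𝓝 α₁) :=
  correlationDim_mixture_eq_min_general α₁ α₂ hα μ₁ μ₂ s hs hsep c₁ C₁ ε₁ hc₁ hC₁ hε₁ hball₁ c₂ C₂
    ε₂ hC₂ hε₂ hball₂
end

section
/- Let μ be a Borel probability measure on ℝ^N, let α ≥ 0, and set D_α := {x ∈ ℝ^N : D̲_μ(x) ≤ α}, where D̲_μ(x) is the lower pointwise dimension of μ at x. Then the Hausdorff dimension of D_α satisfies dim_H(D_α) ≤ α. -/
/-! If the lower pointwise dimension of `μ` at `x` is below `d`, then `μ (ball x r) ≥ r ^ d`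
for arbitrarily small radii `r`. At each scale, the Vitali covering lemma extracts from such balls
a disjoint subfamily whose fourfold enlargements still cover the set; by disjointness the `d`-th
powers of the diameters of the enlarged balls sum to at most `8 ^ d * μ univ`. Hence the set has
finite `d`-dimensional Hausdorff measure, so its Hausdorff dimension is at most `d`. -/

open MeasureTheory Filter Metric Topology ENNReal
open TopologicalSpace
open scoped NNReal

/-- The lower pointwise dimension of `μ` at `x`, valued in `EReal` so that points whose small
balls have measure zero get dimension `+∞`:
`liminf_{ε → 0⁺} log μ(B(x,ε)) / log ε` (with `log 0 = ⊥` in `EReal`). -/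
noncomputable def lowerPointwiseDimE {X : Type*} [MetricSpace X] [MeasurableSpace X]
    (μ : Measure X) (x : X) : EReal :=
  liminf (fun ε : ℝ => ENNReal.log (μ (Metric.ball x ε)) * (((Real.log ε)⁻¹ : ℝ) : EReal))
    (𝓝[>] 0)

lemma ENNReal.ofReal_rpow_lt_of_log_mul_inv_log_lt {m : ℝ≥0∞} (hm : m ≠ ⊤) {r d : ℝ}
    (hr₀ : 0 < r) (hr₁ : r < 1)
    (h : ENNReal.log m * (((Real.log r)⁻¹ : ℝ) : EReal) < d) : ENNReal.ofReal (r ^ d) < m := by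
  have hlog_r : Real.log r < 0 := Real.log_neg hr₀ hr₁
  have hm₀ : m ≠ 0 := by
    rintro rfl
    rw [ENNReal.log_zero, EReal.bot_mul_coe_of_neg (inv_lt_zero.2 hlog_r)] at h
    exact not_top_lt h
  have hm_pos : 0 < m.toReal := ENNReal.toReal_pos hm₀ hm
  rw [ENNReal.log_pos_real hm₀ hm, ← EReal.coe_mul, EReal.coe_lt_coe_iff, ← div_eq_mul_inv,
    div_lt_iff_of_neg hlog_r, ← Real.log_rpow hr₀,
    Real.log_lt_log_iff (Real.rpow_pos_of_pos hr₀ d) hm_pos] at h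
  exact (ENNReal.ofReal_lt_ofReal_iff_of_nonneg (Real.rpow_nonneg hr₀.le d)).2 h |>.trans_eq
    (ENNReal.ofReal_toReal hm)

section PseudoMetricSpace

variable {X : Type*} [PseudoMetricSpace X]

lemma Metric.ediam_closedBall_le_ofReal (x : X) (r : ℝ) :
    ediam (closedBall x r) ≤ ENNReal.ofReal (2 * r) :=
  ediam_le_of_forall_dist_le fun a ha b hb =>
    (dist_triangle_right a b x).trans (by linarith [mem_closedBall.1 ha, mem_closedBall.1 hb])

lemma exists_countable_pairwiseDisjoint_closedBall_cover [SeparableSpace X] (s : Set X)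
    {ρ : X → ℝ} {R : ℝ} (hρ : ∀ x ∈ s, ρ x ∈ Set.Ioc 0 R) :
    ∃ u ⊆ s, u.Countable ∧ u.PairwiseDisjoint (fun b => closedBall b (ρ b)) ∧
      s ⊆ ⋃ b ∈ u, closedBall b (4 * ρ b) := by
  obtain ⟨u, hus, hdisj, hcover⟩ :=
    Vitali.exists_disjoint_subfamily_covering_enlargement_closedBall s id ρ R
      (fun x hx => (hρ x hx).2) 4 (by norm_num)
  refine ⟨u, hus, hdisj.countable_of_nonempty_interior fun b hb => ?_, hdisj, fun x hx => ?_⟩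
  · exact ⟨b, ball_subset_interior_closedBall (mem_ball_self (hρ b (hus hb)).1)⟩
  · obtain ⟨b, hb, hsub⟩ := hcover x hx
    exact Set.mem_biUnion hb (hsub (mem_closedBall_self (hρ x hx).1.le))

lemma tsum_ediam_closedBall_rpow_le [MeasurableSpace X] [OpensMeasurableSpace X]
    (μ : Measure X) {u : Set X} (hu : u.Countable) {ρ : X → ℝ}
    (hdisj : u.PairwiseDisjoint fun b => closedBall b (ρ b)) {c d : ℝ} (hc : 0 ≤ c) (hd : 0 ≤ d)
    (hρ : ∀ b ∈ u, 0 ≤ ρ b ∧ ENNReal.ofReal (ρ b ^ d) ≤ μ (closedBall b (ρ b))) :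
    ∑' b : u, ediam (closedBall (b : X) (c * ρ b)) ^ d ≤
      ENNReal.ofReal ((2 * c) ^ d) * μ .univ := by
  have hterm (b : u) : ediam (closedBall (b : X) (c * ρ b)) ^ d ≤
      ENNReal.ofReal ((2 * c) ^ d) * μ (closedBall b (ρ b)) := by
    obtain ⟨hρ₀, hρμ⟩ := hρ b b.2
    calc ediam (closedBall (b : X) (c * ρ b)) ^ d
        ≤ ENNReal.ofReal (2 * (c * ρ b)) ^ d := by gcongr; exact ediam_closedBall_le_ofReal _ _
      _ = ENNReal.ofReal ((2 * c) ^ d) * ENNReal.ofReal (ρ b ^ d) := by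
        rw [ENNReal.ofReal_rpow_of_nonneg (by positivity) hd, ← mul_assoc,
          Real.mul_rpow (by positivity) hρ₀, ENNReal.ofReal_mul (by positivity)]
      _ ≤ ENNReal.ofReal ((2 * c) ^ d) * μ (closedBall b (ρ b)) := by gcongr
  calc ∑' b : u, ediam (closedBall (b : X) (c * ρ b)) ^ d
      ≤ ENNReal.ofReal ((2 * c) ^ d) * ∑' b : u, μ (closedBall b (ρ b)) := by
        rw [← ENNReal.tsum_mul_left]; exact ENNReal.tsum_le_tsum hterm
    _ = ENNReal.ofReal ((2 * c) ^ d) * μ (⋃ b ∈ u, closedBall b (ρ b)) := by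
        rw [measure_biUnion hu hdisj fun b _ => measurableSet_closedBall]
    _ ≤ ENNReal.ofReal ((2 * c) ^ d) * μ .univ := by gcongr; exact Set.subset_univ _

end PseudoMetricSpace

section MetricSpace

variable {X : Type*} [MetricSpace X]

lemma frequently_ofReal_rpow_le_measure_ball_of_lowerPointwiseDimE_lt [MeasurableSpace X]
    (μ : Measure X) [IsFiniteMeasure μ] {x : X} {d : ℝ} (hx : lowerPointwiseDimE μ x < d) :
    ∃ᶠ r in 𝓝[>] (0 : ℝ), ENNReal.ofReal (r ^ d) ≤ μ (ball x r) := by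
  have h01 : ∀ᶠ r in 𝓝[>] (0 : ℝ), r ∈ Set.Ioo (0 : ℝ) 1 :=
    Ioo_mem_nhdsGT_of_mem ⟨le_rfl, one_pos⟩
  refine ((frequently_lt_of_liminf_lt (by isBoundedDefault) hx).and_eventually h01).mono ?_
  rintro r ⟨hr, hr₀, hr₁⟩
  exact (ENNReal.ofReal_rpow_lt_of_log_mul_inv_log_lt (measure_ne_top μ _) hr₀ hr₁ hr).le

theorem hausdorffMeasure_le_of_frequently_ofReal_rpow_le_measure_ball [SeparableSpace X]
    [MeasurableSpace X] [BorelSpace X] (μ : Measure X) {d : ℝ} (hd : 0 ≤ d) {s : Set X}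
    (hs : ∀ x ∈ s, ∃ᶠ r in 𝓝[>] (0 : ℝ), ENNReal.ofReal (r ^ d) ≤ μ (ball x r)) :
    μH[d] s ≤ ENNReal.ofReal (8 ^ d) * μ .univ := by
  have radii (n : ℕ) (x : X) (hx : x ∈ s) : ∃ r ∈ Set.Ioc (0 : ℝ) (n + 1 : ℝ)⁻¹,
      ENNReal.ofReal (r ^ d) ≤ μ (closedBall x r) := by
    obtain ⟨r, hrμ, hr⟩ := ((hs x hx).and_eventually
      (Ioc_mem_nhdsGT (by positivity : (0 : ℝ) < (n + 1 : ℝ)⁻¹))).exists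
    exact ⟨r, hr, hrμ.trans (measure_mono ball_subset_closedBall)⟩
  choose! ρ hρ hρμ using radii
  choose u hus hu_count hu_disj hu_cover using fun n =>
    exists_countable_pairwiseDisjoint_closedBall_cover s (hρ n)
  have (n : ℕ) : Countable (u n) := (hu_count n).to_subtype
  have hδ : Tendsto (fun n : ℕ => ENNReal.ofReal (8 * (n + 1 : ℝ)⁻¹)) atTop (𝓝 0) := by
    simpa using ENNReal.tendsto_ofReal
      ((tendsto_one_div_add_atTop_nhds_zero_nat (𝕜 := ℝ)).const_mul 8)
  calc μH[d] s
      ≤ liminf (fun n => ∑' b : u n, ediam (closedBall (b : X) (4 * ρ n b)) ^ d) atTop :=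
        Measure.hausdorffMeasure_le_liminf_tsum d s _ hδ _
          (.of_forall fun n b => (ediam_closedBall_le_ofReal _ _).trans <|
            ENNReal.ofReal_le_ofReal (by linarith [(hρ n b (hus n b.2)).2]))
          (.of_forall fun n x hx => by simpa using hu_cover n hx)
    _ ≤ ENNReal.ofReal (8 ^ d) * μ .univ := liminf_le_of_frequently_le' <| .of_forall fun n => by
        refine (tsum_ediam_closedBall_rpow_le μ (hu_count n) (hu_disj n) (c := 4) (by norm_num)
          hd fun b hb => ⟨(hρ n b (hus n hb)).1.le, hρμ n b (hus n hb)⟩).trans_eq ?_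
        norm_num

theorem dimH_setOf_lowerPointwiseDimE_le [SeparableSpace X] [MeasurableSpace X]
    [BorelSpace X] (μ : Measure X) [IsFiniteMeasure μ] (α : ℝ) :
    dimH {x | lowerPointwiseDimE μ x ≤ α} ≤ ENNReal.ofReal α := by
  refine ENNReal.le_of_forall_pos_le_add fun ε hε _ => ?_
  set d : ℝ≥0 := α.toNNReal + ε
  have hαd : α < d := by
    rw [NNReal.coe_add, Real.coe_toNNReal']
    linarith [le_max_left α 0, show (0 : ℝ) < ε from hε]
  calc dimH {x | lowerPointwiseDimE μ x ≤ α} ≤ d :=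
        dimH_le_of_hausdorffMeasure_ne_top <| ne_top_of_le_ne_top (by finiteness) <|
          hausdorffMeasure_le_of_frequently_ofReal_rpow_le_measure_ball μ d.2 fun x hx =>
            frequently_ofReal_rpow_le_measure_ball_of_lowerPointwiseDimE_lt μ <|
              hx.trans_lt (EReal.coe_lt_coe_iff.2 hαd)
    _ = ENNReal.ofReal α + ε := ENNReal.coe_add _ _

end MetricSpace

theorem dimH_le_of_lowerPointwiseDim_le_general {N : ℕ}
    (μ : Measure (EuclideanSpace ℝ (Fin N))) [IsProbabilityMeasure μ]
    (α : ℝ) :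
    dimH {x : EuclideanSpace ℝ (Fin N) | lowerPointwiseDimE μ x ≤ (α : EReal)}
      ≤ ENNReal.ofReal α :=
  dimH_setOf_lowerPointwiseDimE_le μ α

/-- Cutler's theorem, first half: the set of points where the lower pointwise dimension of `μ`
is at most `α` has Hausdorff dimension at most `α`. -/
theorem dimH_le_of_lowerPointwiseDim_le {N : ℕ}
    (μ : Measure (EuclideanSpace ℝ (Fin N))) [IsProbabilityMeasure μ]
    (α : ℝ) (hα : 0 ≤ α) :
    dimH {x : EuclideanSpace ℝ (Fin N) | lowerPointwiseDimE μ x ≤ (α : EReal)}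
      ≤ ENNReal.ofReal α :=
  dimH_le_of_lowerPointwiseDim_le_general μ α
end

section
/- Let μ be a Borel probability measure on ℝ^N such that for μ-almost every x the pointwise dimension D_μ(x) exists and equals a fixed constant d. Then the Hausdorff dimension of μ, defined as D_H(μ) := inf{ α ∈ [0,N] : sup{ μ(E) : E ⊆ ℝ^N Borel with dim_H(E) ≤ α } = 1 }, equals d. -/
/-!
If `μ (ball x r) ≤ r ^ s` for all small `r` at almost every `x`, the mass distribution principle
gives `μ ≤ μH[s]` on the pieces where this holds uniformly, so every set of positive measure has
dimension at least `s`. If instead `μ (ball x r) ≥ r ^ t` for small `r`, a Vitali covering by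
`4δ`-balls around centres with disjoint `δ`-balls uses at most `μ univ / δ ^ t` balls, so the set
of such points is `μH[s]`-null for every `s > t`, and `μ` lives on a Borel set of dimension `≤ t`.
Pointwise dimension `d` almost everywhere gives the first bound for all `s < d` and the second for
all `t > d`; hence `d` is the least element of the set whose infimum is taken.
-/

open MeasureTheory Filter Metric Topology ENNReal

open Set

variable {X : Type*}

theorem subset_iUnion_forall_mem_Ioo_of_eventually {E : Set X} {P : X → ℝ → Prop}
    (h : ∀ x ∈ E, ∀ᶠ r in 𝓝[>] 0, P x r) :
    E ⊆ ⋃ n : ℕ, {x | ∀ r ∈ Ioo 0 ((n : ℝ) + 1)⁻¹, P x r} := fun x hx => by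
  obtain ⟨w, hw, hPw⟩ := mem_nhdsGT_iff_exists_Ioo_subset.1 (h x hx)
  obtain ⟨n, hn⟩ := exists_nat_one_div_lt (mem_Ioi.1 hw)
  exact mem_iUnion.2 ⟨n, fun r hr => hPw ⟨hr.1, hr.2.trans (by simpa using hn)⟩⟩

theorem iSup_measure_eq_one [MeasurableSpace X] {μ : Measure X} [IsProbabilityMeasure μ]
    {P : Set X → Prop} {E : Set X} (hE : MeasurableSet E) (hPE : P E) (hE_ae : E ∈ ae μ) :
    (⨆ (F : Set X) (_ : MeasurableSet F) (_ : P F), μ F) = 1 :=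
  le_antisymm (iSup₂_le fun _ _ => iSup_le fun _ => prob_le_one) <|
    (measure_univ (μ := μ)).symm.trans_le <| (measure_congr (eventuallyEq_univ.2 hE_ae)).ge.trans <|
      le_iSup₂_of_le E hE <| le_iSup_of_le hPE le_rfl

variable [MetricSpace X]

theorem exists_pairwiseDisjoint_closedBall_covering (E : Set X) {δ : ℝ} (hδ : 0 ≤ δ) :
    ∃ u ⊆ E, u.PairwiseDisjoint (fun b => closedBall b δ) ∧
      E ⊆ ⋃ b ∈ u, closedBall b (4 * δ) := by
  obtain ⟨u, huE, hdisj, hcov⟩ := Vitali.exists_disjoint_subfamily_covering_enlargement_closedBall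
    E id (fun _ => δ) δ (fun _ _ => le_rfl) 4 (by norm_num)
  refine ⟨u, huE, hdisj, fun x hx => ?_⟩
  obtain ⟨b, hb, hxb⟩ := hcov x hx
  exact mem_biUnion hb (hxb (mem_closedBall_self hδ))

variable [MeasurableSpace X] {μ : Measure X}

/-- `D_μ(x) = d`. As `Real.log 0 = 0`, a null ball contributes `0` to the ratio, so lower bounds
on `μ (ball x r)` also need `x ∈ μ.support`. -/
def HasPointwiseDim (μ : Measure X) (x : X) (d : ℝ) : Prop :=
  Tendsto (fun r => Real.log (μ (ball x r)).toReal / Real.log r) (𝓝[>] 0) (𝓝 d)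

namespace HasPointwiseDim

variable {x : X} {d : ℝ}

theorem nonneg [IsZeroOrProbabilityMeasure μ] (hx : HasPointwiseDim μ x d) : 0 ≤ d :=
  ge_of_tendsto hx <| by
    filter_upwards [Ioo_mem_nhdsGT one_pos] with r hr
    exact div_nonneg_of_nonpos (Real.log_nonpos ENNReal.toReal_nonneg measureReal_le_one)
      (Real.log_nonpos hr.1.le hr.2.le)

theorem eventually_measure_ball_le_rpow [IsFiniteMeasure μ] (hx : HasPointwiseDim μ x d) {s : ℝ}
    (hs : s < d) : ∀ᶠ r in 𝓝[>] 0, μ (ball x r) ≤ ENNReal.ofReal (r ^ s) := by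
  filter_upwards [hx.eventually (eventually_gt_nhds hs), Ioo_mem_nhdsGT one_pos] with r hsr hr
  refine (ENNReal.ofReal_toReal (measure_ne_top μ _)).symm.trans_le (ENNReal.ofReal_le_ofReal ?_)
  exact Real.le_rpow_of_log_le hr.1 ((lt_div_iff_of_neg (Real.log_neg hr.1 hr.2)).1 hsr).le

theorem eventually_rpow_le_measure_ball [IsFiniteMeasure μ] (hx : HasPointwiseDim μ x d)
    (hx_supp : x ∈ μ.support) {t : ℝ} (ht : d < t) :
    ∀ᶠ r in 𝓝[>] 0, ENNReal.ofReal (r ^ t) ≤ μ (ball x r) := by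
  filter_upwards [hx.eventually (eventually_lt_nhds ht), Ioo_mem_nhdsGT one_pos] with r htr hr
  have hpos : 0 < (μ (ball x r)).toReal := ENNReal.toReal_pos
    ((Measure.mem_support_iff_forall x).1 hx_supp _ (ball_mem_nhds x hr.1)).ne' (measure_ne_top μ _)
  refine ENNReal.ofReal_le_of_le_toReal ((Real.rpow_le_iff_le_log hr.1 hpos).2 ?_)
  exact ((div_lt_iff_of_neg (Real.log_neg hr.1 hr.2)).1 htr).le

end HasPointwiseDim

theorem measure_le_ediam_rpow_of_measure_ball_le {x : X} {A : Set X} {s r₀ : ℝ}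
    (hx : ∀ r ∈ Ioo 0 r₀, μ (ball x r) ≤ ENNReal.ofReal (r ^ s)) (hxA : x ∈ A)
    (hA : ediam A < ENNReal.ofReal r₀) : μ A ≤ ediam A ^ s := by
  have hA_top : ediam A ≠ ∞ := (hA.trans ofReal_lt_top).ne
  set D := diam A
  have hD : ENNReal.ofReal D = ediam A := ENNReal.ofReal_toReal hA_top
  have hDr₀ : D < r₀ := by
    rw [← hD] at hA
    exact (ENNReal.ofReal_lt_ofReal_iff_of_nonneg ENNReal.toReal_nonneg).1 hA
  have hlim : Tendsto (fun r => ENNReal.ofReal r ^ s) (𝓝[>] D) (𝓝 (ediam A ^ s)) := by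
    rw [← hD]
    exact ((ENNReal.continuous_rpow_const.comp ENNReal.continuous_ofReal).tendsto D).mono_left
      nhdsWithin_le_nhds
  refine ge_of_tendsto hlim ?_
  filter_upwards [Ioo_mem_nhdsGT hDr₀] with r hr
  have hr0 : 0 < r := ENNReal.toReal_nonneg.trans_lt hr.1
  have hAr : A ⊆ ball x r := fun y hy =>
    mem_ball.2 <| (dist_le_diam_of_mem' hA_top hy hxA).trans_lt hr.1
  calc μ A ≤ μ (ball x r) := measure_mono hAr
    _ ≤ ENNReal.ofReal (r ^ s) := hx r ⟨hr0, hr.2⟩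
    _ = ENNReal.ofReal r ^ s := (ENNReal.ofReal_rpow_of_pos hr0).symm

variable [BorelSpace X]

theorem measure_le_hausdorffMeasure_of_measure_ball_le {E : Set X} {s r₀ : ℝ} (hs : 0 ≤ s)
    (hr₀ : 0 < r₀)
    (hE : ∀ x ∈ E, ∀ r ∈ Ioo 0 r₀, μ (ball x r) ≤ ENNReal.ofReal (r ^ s)) : μ E ≤ μH[s] E := by
  -- `E` need not be measurable, so restrict the outer measure rather than the measure.
  have key : OuterMeasure.restrict E μ.toOuterMeasure ≤ OuterMeasure.mkMetric fun r => r ^ s :=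
    OuterMeasure.le_mkMetric _ _ (ENNReal.ofReal (r₀ / 2)) (by simpa using hr₀) fun A hA => by
      rw [OuterMeasure.restrict_apply, Measure.coe_toOuterMeasure]
      rcases (A ∩ E).eq_empty_or_nonempty with hAE | ⟨x, hxA, hxE⟩
      · simp [hAE]
      have hAE_lt : ediam (A ∩ E) < ENNReal.ofReal r₀ :=
        (ediam_mono inter_subset_left).trans_lt <| hA.trans_lt <|
          (ENNReal.ofReal_lt_ofReal_iff hr₀).2 (half_lt_self hr₀)
      calc μ (A ∩ E) ≤ ediam (A ∩ E) ^ s :=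
            measure_le_ediam_rpow_of_measure_ball_le (hE x hxE) ⟨hxA, hxE⟩ hAE_lt
        _ ≤ ediam A ^ s := ENNReal.rpow_le_rpow (ediam_mono inter_subset_left) hs
  simpa [OuterMeasure.coe_mkMetric, Measure.hausdorffMeasure] using key E

theorem le_dimH_of_ae_eventually_measure_ball_le {s : ℝ} (hs : 0 ≤ s)
    (h : ∀ᵐ x ∂μ, ∀ᶠ r in 𝓝[>] 0, μ (ball x r) ≤ ENNReal.ofReal (r ^ s)) {E : Set X}
    (hμE : μ E ≠ 0) : ENNReal.ofReal s ≤ dimH E := by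
  set F : ℕ → Set X := fun n =>
    E ∩ {x | ∀ r ∈ Ioo 0 ((n : ℝ) + 1)⁻¹, μ (ball x r) ≤ ENNReal.ofReal (r ^ s)}
  obtain ⟨n, hn⟩ : ∃ n, μ (F n) ≠ 0 := by
    by_contra! hF
    have hcov : E ∩ {x | ∀ᶠ r in 𝓝[>] 0, μ (ball x r) ≤ ENNReal.ofReal (r ^ s)} ⊆ ⋃ n, F n := by
      rw [← inter_iUnion]
      exact inter_subset_inter_right _ (subset_iUnion_forall_mem_Ioo_of_eventually fun _ hx => hx)
    exact hμE <| measure_inter_conull h ▸ measure_mono_null hcov (measure_iUnion_null hF)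
  have hFn : μH[s] (F n) ≠ 0 := fun h0 => hn <| nonpos_iff_eq_zero.1 <|
    h0 ▸ measure_le_hausdorffMeasure_of_measure_ball_le hs (by positivity) fun x hx => hx.2
  calc ENNReal.ofReal s = (s.toNNReal : ℝ≥0∞) := rfl
    _ ≤ dimH (F n) := le_dimH_of_hausdorffMeasure_ne_zero (by rwa [Real.coe_toNNReal _ hs])
    _ ≤ dimH E := dimH_mono inter_subset_left

theorem exists_finite_closedBall_cover_of_rpow_le_measure_ball [IsFiniteMeasure μ] {E : Set X}
    {t δ : ℝ} (hδ : 0 < δ) (hE : ∀ x ∈ E, ENNReal.ofReal (δ ^ t) ≤ μ (ball x δ)) :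
    ∃ u : Set X, u.Finite ∧ E ⊆ ⋃ b ∈ u, closedBall b (4 * δ) ∧
      ∑' _ : u, ENNReal.ofReal (δ ^ t) ≤ μ univ := by
  obtain ⟨u, huE, hdisj, hcov⟩ := exists_pairwiseDisjoint_closedBall_covering E hδ.le
  have hpack : ∑' _ : u, ENNReal.ofReal (δ ^ t) ≤ μ univ :=
    calc ∑' _ : u, ENNReal.ofReal (δ ^ t) ≤ ∑' b : u, μ (ball (b : X) δ) :=
          ENNReal.tsum_le_tsum fun b => hE b (huE b.2)
      _ ≤ μ (⋃ b : u, ball (b : X) δ) := tsum_meas_le_meas_iUnion_of_disjoint μ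
          (fun _ => measurableSet_ball) ((hdisj.mono fun _ => ball_subset_closedBall).subtype _ _)
      _ ≤ μ univ := measure_mono (subset_univ _)
  refine ⟨u, not_infinite.1 fun hinf => ?_, hcov, hpack⟩
  have := hinf.to_subtype
  rw [ENNReal.tsum_const_eq_top_of_ne_zero (ENNReal.ofReal_pos.2 (Real.rpow_pos_of_pos hδ t)).ne',
    top_le_iff] at hpack
  exact measure_ne_top μ univ hpack

theorem hausdorffMeasure_eq_zero_of_rpow_le_measure_ball [IsFiniteMeasure μ] {E : Set X}
    {s t r₀ : ℝ} (hs : 0 ≤ s) (hts : t < s) (hr₀ : 0 < r₀)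
    (hE : ∀ x ∈ E, ∀ r ∈ Ioo 0 r₀, ENNReal.ofReal (r ^ t) ≤ μ (ball x r)) : μH[s] E = 0 := by
  obtain ⟨δ, -, hδ, hδ_lim⟩ := exists_seq_strictAnti_tendsto' hr₀
  choose u hu hcov hpack using fun n =>
    exists_finite_closedBall_cover_of_rpow_le_measure_ball (hδ n).1 fun x hx => hE x hx _ (hδ n)
  have := fun n => (hu n).to_subtype
  have hdiam (n : ℕ) (b : X) : ediam (closedBall b (4 * δ n)) ≤ ENNReal.ofReal (8 * δ n) :=
    ediam_le_of_forall_dist_le fun p hp q hq => (dist_triangle_right p q b).trans <| by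
      linarith [mem_closedBall.1 hp, mem_closedBall.1 hq]
  have hsum (n : ℕ) : ∑' b : u n, ediam (closedBall (b : X) (4 * δ n)) ^ s ≤
      ENNReal.ofReal (8 ^ s * δ n ^ (s - t)) * μ univ := by
    have hδn := (hδ n).1
    have h8 : ENNReal.ofReal (8 * δ n) ^ s =
        ENNReal.ofReal (8 ^ s * δ n ^ (s - t)) * ENNReal.ofReal (δ n ^ t) := by
      rw [ENNReal.ofReal_rpow_of_pos (by positivity), ← ENNReal.ofReal_mul (by positivity),
        mul_assoc, ← Real.rpow_add hδn, sub_add_cancel, Real.mul_rpow (by norm_num) hδn.le]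
    calc ∑' b : u n, ediam (closedBall (b : X) (4 * δ n)) ^ s
        ≤ ∑' _ : u n, ENNReal.ofReal (8 ^ s * δ n ^ (s - t)) * ENNReal.ofReal (δ n ^ t) :=
          ENNReal.tsum_le_tsum fun b => (ENNReal.rpow_le_rpow (hdiam n b) hs).trans_eq h8
      _ ≤ ENNReal.ofReal (8 ^ s * δ n ^ (s - t)) * μ univ := by
          rw [ENNReal.tsum_mul_left]
          gcongr; exact hpack n
  have hlim : Tendsto (fun n => ENNReal.ofReal (8 ^ s * δ n ^ (s - t)) * μ univ) atTop (𝓝 0) := by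
    have hpow : Tendsto (fun n => δ n ^ (s - t)) atTop (𝓝 0) := by
      simpa [Function.comp_def, Real.zero_rpow (sub_pos.2 hts).ne'] using
        (Real.continuousAt_rpow_const 0 (s - t) (Or.inr (sub_pos.2 hts).le)).tendsto.comp hδ_lim
    simpa using ENNReal.Tendsto.mul_const (ENNReal.tendsto_ofReal (hpow.const_mul (8 ^ s)))
      (Or.inr (measure_ne_top μ univ))
  refine nonpos_iff_eq_zero.1 ?_
  calc μH[s] E ≤ liminf (fun n => ∑' b : u n, ediam (closedBall (b : X) (4 * δ n)) ^ s) atTop :=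
        Measure.hausdorffMeasure_le_liminf_tsum s E (fun n => ENNReal.ofReal (8 * δ n)) ?_ _
          (Eventually.of_forall fun n b => hdiam n b) (Eventually.of_forall fun n x hx => by
            obtain ⟨b, hb, hxb⟩ := mem_iUnion₂.1 (hcov n hx)
            exact mem_iUnion.2 ⟨⟨b, hb⟩, hxb⟩)
    _ ≤ _ := liminf_le_liminf (Eventually.of_forall hsum)
    _ = 0 := hlim.liminf_eq
  simpa using ENNReal.tendsto_ofReal (hδ_lim.const_mul 8)

theorem hausdorffMeasure_eq_zero_of_eventually_rpow_le_measure_ball [IsFiniteMeasure μ]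
    {E : Set X} {s t : ℝ} (hs : 0 ≤ s) (hts : t < s)
    (hE : ∀ x ∈ E, ∀ᶠ r in 𝓝[>] 0, ENNReal.ofReal (r ^ t) ≤ μ (ball x r)) : μH[s] E = 0 :=
  measure_mono_null (subset_iUnion_forall_mem_Ioo_of_eventually hE) <| measure_iUnion_null fun _ =>
    hausdorffMeasure_eq_zero_of_rpow_le_measure_ball hs hts (by positivity) fun _ hx => hx

theorem exists_measurableSet_dimH_le_of_ae_eventually_rpow_le_measure_ball [IsFiniteMeasure μ]
    {s t : ℝ} (hs : 0 ≤ s) (hts : t < s)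
    (h : ∀ᵐ x ∂μ, ∀ᶠ r in 𝓝[>] 0, ENNReal.ofReal (r ^ t) ≤ μ (ball x r)) :
    ∃ E, MeasurableSet E ∧ dimH E ≤ ENNReal.ofReal s ∧ E ∈ ae μ := by
  set G := {x | ∀ᶠ r in 𝓝[>] 0, ENNReal.ofReal (r ^ t) ≤ μ (ball x r)}
  have hG : μH[s] G = 0 :=
    hausdorffMeasure_eq_zero_of_eventually_rpow_le_measure_ball hs hts fun _ hx => hx
  refine ⟨toMeasurable μH[s] G, measurableSet_toMeasurable _ _,
    dimH_le_of_hausdorffMeasure_ne_top ?_, mem_of_superset h (subset_toMeasurable _ _)⟩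
  rw [Real.coe_toNNReal _ hs, measure_toMeasurable, hG]
  exact zero_ne_top

theorem ofReal_le_dimH_of_ae_hasPointwiseDim [IsFiniteMeasure μ] {d : ℝ}
    (h : ∀ᵐ x ∂μ, HasPointwiseDim μ x d) {E : Set X} (hE : μ E ≠ 0) :
    ENNReal.ofReal d ≤ dimH E := by
  refine le_of_forall_lt_imp_le_of_dense fun c hc => ?_
  have hc_top : c ≠ ∞ := (hc.trans ofReal_lt_top).ne
  rw [← ENNReal.ofReal_toReal hc_top]
  have hcd : c.toReal < d := (lt_ofReal_iff_toReal_lt hc_top).1 hc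
  exact le_dimH_of_ae_eventually_measure_ball_le ENNReal.toReal_nonneg
    (h.mono fun _ hx => hx.eventually_measure_ball_le_rpow hcd) hE

theorem exists_measurableSet_mem_ae_dimH_le_of_ae_hasPointwiseDim [IsFiniteMeasure μ]
    [HereditarilyLindelofSpace X] {d : ℝ} (h : ∀ᵐ x ∂μ, HasPointwiseDim μ x d) :
    ∃ E, MeasurableSet E ∧ E ∈ ae μ ∧ dimH E ≤ ENNReal.ofReal d := by
  obtain ⟨s, -, hs, hs_lim⟩ := exists_seq_strictAnti_tendsto (max d 0)
  have hE (n : ℕ) : ∃ E, MeasurableSet E ∧ dimH E ≤ ENNReal.ofReal (s n) ∧ E ∈ ae μ := by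
    obtain ⟨t, hdt, hts⟩ := exists_between ((le_max_left d 0).trans_lt (hs n))
    refine exists_measurableSet_dimH_le_of_ae_eventually_rpow_le_measure_ball
      ((le_max_right d 0).trans (hs n).le) hts ?_
    filter_upwards [h, Measure.support_mem_ae (μ := μ)] with x hx hx_supp
    exact hx.eventually_rpow_le_measure_ball hx_supp hdt
  choose E hE_meas hE_dim hE_ae using hE
  refine ⟨⋂ n, E n, .iInter hE_meas, countable_iInter_mem.2 hE_ae, ?_⟩
  have hdim := ge_of_tendsto (ENNReal.tendsto_ofReal hs_lim) <| Eventually.of_forall fun n =>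
    (dimH_mono (iInter_subset E n)).trans (hE_dim n)
  simpa [ENNReal.ofReal_max] using hdim

/-- If a Borel probability measure `μ` on `ℝ^N` has pointwise dimension equal to a constant `d`
at `μ`-almost every point, then the Hausdorff dimension of `μ`,
`D_H(μ) = inf{α ∈ [0,N] : sup{μ(E) : E Borel, dim_H(E) ≤ α} = 1}`, equals `d`. -/
theorem hausdorffDim_of_measure_eq_of_ae_pointwiseDim {N : ℕ}
    (μ : Measure (EuclideanSpace ℝ (Fin N))) [IsProbabilityMeasure μ] (d : ℝ)
    (h : ∀ᵐ x ∂μ, Tendsto (fun ε : ℝ => Real.log (μ (Metric.ball x ε)).toReal / Real.log ε)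
      (𝓝[>] 0) (𝓝 d)) :
    sInf {α : ℝ | α ∈ Set.Icc (0 : ℝ) N ∧
      (⨆ (E : Set (EuclideanSpace ℝ (Fin N))) (_ : MeasurableSet E)
        (_ : dimH E ≤ ENNReal.ofReal α), μ E) = 1} = d := by
  set S := {α : ℝ | α ∈ Set.Icc (0 : ℝ) N ∧
      (⨆ (E : Set (EuclideanSpace ℝ (Fin N))) (_ : MeasurableSet E)
        (_ : dimH E ≤ ENNReal.ofReal α), μ E) = 1}
  have hlow : ∀ α ∈ S, d ≤ α := by
    rintro α ⟨hα, hsup⟩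
    obtain ⟨E, -, hEdim, hE⟩ : ∃ E, MeasurableSet E ∧ dimH E ≤ ENNReal.ofReal α ∧ μ E ≠ 0 := by
      have h0 : (0 : ℝ≥0∞) < 1 := zero_lt_one
      rw [← hsup] at h0
      simpa only [lt_iSup_iff, pos_iff_ne_zero, exists_prop] using h0
    exact (ENNReal.ofReal_le_ofReal_iff hα.1).1
      ((ofReal_le_dimH_of_ae_hasPointwiseDim h hE).trans hEdim)
  have hN : (N : ℝ) ∈ S := ⟨⟨N.cast_nonneg, le_rfl⟩, iSup_measure_eq_one MeasurableSet.univ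
    (by rw [Real.dimH_univ_eq_finrank, finrank_euclideanSpace_fin, ENNReal.ofReal_natCast])
    univ_mem⟩
  obtain ⟨E, hE, hE_ae, hEdim⟩ := exists_measurableSet_mem_ae_dimH_le_of_ae_hasPointwiseDim h
  obtain ⟨x, hx⟩ := h.exists
  have hd : d ∈ S := ⟨⟨HasPointwiseDim.nonneg hx, hlow N hN⟩, iSup_measure_eq_one hE hEdim hE_ae⟩
  exact IsLeast.csInf_eq ⟨hd, hlow⟩
end

section
/- Let (X,ρ) be a compact metric space, let μ be a Borel probability measure on X, and let f : X → X be a locally bi-Lipschitz injection that preserves μ and is ergodic with respect to μ. Suppose the pointwise dimension D_μ(x) exists for μ-almost every x. Then D_μ is constant μ-almost everywhere: there exists d ≥ 0 such that D_μ(x) = d for μ-almost every x ∈ X. -/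
/-!
Near each point `x`, a locally bi-Lipschitz injection `f` of a compact space distorts small
balls by a bounded factor `K`: `f⁻¹' B(f x, ε / K) ⊆ B(x, ε) ⊆ f⁻¹' B(f x, K ε)`, the first
inclusion because the inverse of a continuous injection on a compact space is uniformly
continuous. As `f` preserves `μ`, the measures of the balls about `x` are thus squeezed between
those of the balls about `f x` at rescaled radii (which have positive measure for almost every
`x`, as the support of `μ` is conull), and rescaling the radius by a constant does not
change the limit of `log μ(B(·, ε)) / log ε`. Hence `D_μ ∘ f = D_μ` almost everywhere, and by
ergodicity `D_μ` is almost everywhere constant.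
-/

open MeasureTheory Filter Metric Topology

/-- A map between metric spaces is locally bi-Lipschitz if around every point there is a ball
on which it distorts distances by at most a factor `K`. -/
def LocallyBiLipschitz {X Y : Type*} [MetricSpace X] [MetricSpace Y] (f : X → Y) : Prop :=
  ∀ x : X, ∃ r : ℝ, 0 < r ∧ ∃ K : ℝ, 1 ≤ K ∧
    ∀ u ∈ Metric.ball x r, ∀ v ∈ Metric.ball x r,
      (1 / K) * dist u v ≤ dist (f u) (f v) ∧ dist (f u) (f v) ≤ K * dist u v

section LogRatio

lemma tendsto_const_mul_nhdsGT_zero {c : ℝ} (hc : 0 < c) :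
    Tendsto (c * ·) (𝓝[>] (0 : ℝ)) (𝓝[>] 0) :=
  tendsto_iff_comap.2 (comap_mulLeft_nhdsGT_zero hc).ge

lemma tendsto_log_const_mul_div_log {c : ℝ} (hc : 0 < c) :
    Tendsto (fun ε => Real.log (c * ε) / Real.log ε) (𝓝[>] 0) (𝓝 1) := by
  have hsmall : Tendsto (fun ε => Real.log c / Real.log ε) (𝓝[>] 0) (𝓝 0) :=
    tendsto_const_nhds.div_atBot Real.tendsto_log_nhdsGT_zero
  have hlim : Tendsto (fun ε => Real.log c / Real.log ε + 1) (𝓝[>] 0) (𝓝 1) := by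
    simpa using hsmall.add_const 1
  refine hlim.congr' ?_
  filter_upwards [Ioo_mem_nhdsGT one_pos] with ε hε
  rw [Real.log_mul hc.ne' hε.1.ne', add_div, div_self (Real.log_neg hε.1 hε.2).ne]

lemma Filter.Tendsto.log_comp_const_mul_div_log {b : ℝ → ℝ} {M c : ℝ} (hc : 0 < c)
    (h : Tendsto (fun ε => Real.log (b ε) / Real.log ε) (𝓝[>] 0) (𝓝 M)) :
    Tendsto (fun ε => Real.log (b (c * ε)) / Real.log ε) (𝓝[>] 0) (𝓝 M) := by
  have hprod := (h.comp (tendsto_const_mul_nhdsGT_zero hc)).mul (tendsto_log_const_mul_div_log hc)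
  rw [mul_one] at hprod
  refine hprod.congr' ?_
  filter_upwards [eventually_nhdsGT_zero_mul_left hc (Ioo_mem_nhdsGT one_pos)] with ε hε
  exact div_mul_div_cancel₀ (Real.log_neg hε.1 hε.2).ne

lemma tendsto_log_div_log_of_le_of_le {a b : ℝ → ℝ} {c C M : ℝ} (hc : 0 < c) (hC : 0 < C)
    (hb : ∀ ε, 0 < ε → 0 < b ε) (hlow : ∀ᶠ ε in 𝓝[>] 0, b (c * ε) ≤ a ε)
    (hupp : ∀ᶠ ε in 𝓝[>] 0, a ε ≤ b (C * ε))
    (h : Tendsto (fun ε => Real.log (b ε) / Real.log ε) (𝓝[>] 0) (𝓝 M)) :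
    Tendsto (fun ε => Real.log (a ε) / Real.log ε) (𝓝[>] 0) (𝓝 M) := by
  have hlog : ∀ᶠ ε in 𝓝[>] (0 : ℝ), Real.log ε < 0 := by
    filter_upwards [Ioo_mem_nhdsGT one_pos] with ε hε
    exact Real.log_neg hε.1 hε.2
  refine tendsto_of_tendsto_of_tendsto_of_le_of_le' (h.log_comp_const_mul_div_log hC)
    (h.log_comp_const_mul_div_log hc) ?_ ?_
  · filter_upwards [hlow, hupp, hlog, self_mem_nhdsWithin] with ε hεc hεC hlogε (hε : 0 < ε)
    exact div_le_div_of_nonpos_of_le hlogε.le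
      (Real.log_le_log ((hb _ (mul_pos hc hε)).trans_le hεc) hεC)
  · filter_upwards [hlow, hlog, self_mem_nhdsWithin] with ε hεc hlogε (hε : 0 < ε)
    exact div_le_div_of_nonpos_of_le hlogε.le (Real.log_le_log (hb _ (mul_pos hc hε)) hεc)

end LogRatio

section Metric

variable {X Y : Type*} [MetricSpace X] [MetricSpace Y] {f : X → Y}

lemma LocallyBiLipschitz.continuous (hf : LocallyBiLipschitz f) : Continuous f := by
  refine continuous_iff_continuousAt.2 fun x => ?_
  obtain ⟨r, hr, K, -, hK⟩ := hf x
  exact (LipschitzOnWith.of_dist_le' fun u hu v hv => (hK u hu v hv).2).continuousOn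
    |>.continuousAt (ball_mem_nhds x hr)

lemma Continuous.exists_pos_forall_dist_lt_of_injective [CompactSpace X] (hf : Continuous f)
    (hinj : f.Injective) {r : ℝ} (hr : 0 < r) :
    ∃ δ > 0, ∀ u v, dist (f u) (f v) < δ → dist u v < r := by
  have : CompactSpace (Set.range f) := isCompact_iff_compactSpace.1 (isCompact_range hf)
  have he : Continuous (Equiv.ofInjective f hinj) := hf.subtype_mk _
  let e : X ≃ₜ Set.range f := he.homeoOfEquivCompactToT2
  obtain ⟨δ, hδ, h⟩ := Metric.uniformContinuous_iff.1
    (CompactSpace.uniformContinuous_of_continuous e.symm.continuous) r hr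
  exact ⟨δ, hδ, fun u v huv => by simpa [e] using h (a := e u) (b := e v) huv⟩

lemma LocallyBiLipschitz.eventually_preimage_ball_subset [CompactSpace X]
    (hf : LocallyBiLipschitz f) (hinj : f.Injective) (x : X) :
    ∃ K > 0, ∀ᶠ ε in 𝓝[>] 0,
      f ⁻¹' ball (f x) (K⁻¹ * ε) ⊆ ball x ε ∧ ball x ε ⊆ f ⁻¹' ball (f x) (K * ε) := by
  obtain ⟨r, hr, K, hK, hbl⟩ := hf x
  have hK0 : 0 < K := one_pos.trans_le hK
  obtain ⟨δ, hδ, hinv⟩ := hf.continuous.exists_pos_forall_dist_lt_of_injective hinj hr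
  refine ⟨K, hK0, ?_⟩
  filter_upwards [Ioo_mem_nhdsGT (lt_min hr (mul_pos hK0 hδ))] with ε ⟨hε, hεr⟩
  rw [lt_min_iff] at hεr
  constructor
  · intro u (hu : dist (f u) (f x) < K⁻¹ * ε)
    have hur : dist u x < r := hinv u x (hu.trans (by rw [inv_mul_lt_iff₀ hK0]; exact hεr.2))
    have := (hbl u (mem_ball.2 hur) x (mem_ball_self hr)).1
    rw [one_div] at this
    rw [mem_ball, ← mul_lt_mul_iff_right₀ (inv_pos.2 hK0)]
    linarith
  · intro u hu
    have := (hbl u (ball_subset_ball hεr.1.le hu) x (mem_ball_self hr)).2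
    exact mem_ball.2 (this.trans_lt (mul_lt_mul_of_pos_left hu hK0))

end Metric

noncomputable section PointwiseDimension

variable {X : Type*} [MetricSpace X] [MeasurableSpace X]

def dimRatio (μ : Measure X) (x : X) (ε : ℝ) : ℝ :=
  Real.log (μ (ball x ε)).toReal / Real.log ε

/-- Takes the junk value `0` where the limit does not exist. -/
def pointwiseDim (μ : Measure X) (x : X) : ℝ :=
  limUnder (𝓝[>] 0) (dimRatio μ x)

lemma dimRatio_nonneg (μ : Measure X) [IsZeroOrProbabilityMeasure μ] (x : X) {ε : ℝ}
    (hε₀ : 0 ≤ ε) (hε₁ : ε ≤ 1) : 0 ≤ dimRatio μ x ε :=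
  div_nonneg_of_nonpos
    (Real.log_nonpos ENNReal.toReal_nonneg (ENNReal.toReal_le_of_le_ofReal zero_le_one
      (by simpa using prob_le_one)))
    (Real.log_nonpos hε₀ hε₁)

lemma nonneg_of_tendsto_dimRatio {μ : Measure X} [IsZeroOrProbabilityMeasure μ] {x : X} {L : ℝ}
    (h : Tendsto (dimRatio μ x) (𝓝[>] 0) (𝓝 L)) : 0 ≤ L :=
  ge_of_tendsto h <| by
    filter_upwards [Ioo_mem_nhdsGT one_pos] with ε hε
    exact dimRatio_nonneg μ x hε.1.le hε.2.le

variable [SecondCountableTopology X] [OpensMeasurableSpace X]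

lemma measurable_measure_ball (μ : Measure X) [SFinite μ] (ε : ℝ) :
    Measurable fun x => μ (ball x ε) :=
  measurable_measure_prodMk_left (s := {p : X × X | dist p.2 p.1 < ε})
    (measurableSet_lt (measurable_snd.dist measurable_fst) measurable_const)

lemma aemeasurable_pointwiseDim {μ : Measure X} [SFinite μ]
    (h : ∀ᵐ x ∂μ, ∃ L, Tendsto (dimRatio μ x) (𝓝[>] 0) (𝓝 L)) :
    AEMeasurable (pointwiseDim μ) μ :=
  aemeasurable_of_tendsto_metrizable_ae (𝓝[>] 0)
    (fun ε => (((measurable_measure_ball μ ε).ennreal_toReal).log.div_const _).aemeasurable)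
    (h.mono fun _ => tendsto_nhds_limUnder)

end PointwiseDimension

section Dynamics

variable {X : Type*} [MetricSpace X] [CompactSpace X] [MeasurableSpace X] [BorelSpace X]
  {μ : Measure X} {f : X → X}

lemma tendsto_dimRatio_of_tendsto_dimRatio_apply [IsFiniteMeasure μ] (hinj : f.Injective)
    (hbl : LocallyBiLipschitz f) (hmp : MeasurePreserving f μ μ) {x : X}
    (hfx : f x ∈ μ.support) {M : ℝ} (h : Tendsto (dimRatio μ (f x)) (𝓝[>] 0) (𝓝 M)) :
    Tendsto (dimRatio μ x) (𝓝[>] 0) (𝓝 M) := by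
  obtain ⟨K, hK, hsub⟩ := hbl.eventually_preimage_ball_subset hinj x
  have hpre (ε : ℝ) : μ (f ⁻¹' ball (f x) ε) = μ (ball (f x) ε) :=
    hmp.measure_preimage measurableSet_ball.nullMeasurableSet
  refine tendsto_log_div_log_of_le_of_le (b := fun ε => (μ (ball (f x) ε)).toReal)
    (inv_pos.2 hK) hK (fun ε hε => ?_) ?_ ?_ h
  · exact ENNReal.toReal_pos ((Measure.mem_support_iff_forall _).1 hfx _
      (ball_mem_nhds _ hε)).ne' (measure_ne_top _ _)
  · filter_upwards [hsub] with ε hε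
    rw [← hpre]
    exact ENNReal.toReal_mono (measure_ne_top _ _) (measure_mono hε.1)
  · filter_upwards [hsub] with ε hε
    rw [← hpre]
    exact ENNReal.toReal_mono (measure_ne_top _ _) (measure_mono hε.2)

lemma pointwiseDim_comp_ae_eq [IsFiniteMeasure μ] (hinj : f.Injective)
    (hbl : LocallyBiLipschitz f) (hmp : MeasurePreserving f μ μ)
    (hexists : ∀ᵐ x ∂μ, ∃ L, Tendsto (dimRatio μ x) (𝓝[>] 0) (𝓝 L)) :
    pointwiseDim μ ∘ f =ᵐ[μ] pointwiseDim μ := by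
  filter_upwards [hmp.quasiMeasurePreserving.ae hexists,
    hmp.quasiMeasurePreserving.ae Measure.support_mem_ae] with x ⟨M, hM⟩ hfx
  exact hM.limUnder_eq.trans
    (tendsto_dimRatio_of_tendsto_dimRatio_apply hinj hbl hmp hfx hM).limUnder_eq.symm

end Dynamics

lemma ergodic_of_forall_measure_eq_zero_or_one {α : Type*} [MeasurableSpace α] {μ : Measure α}
    [IsProbabilityMeasure μ] {f : α → α} (hmp : MeasurePreserving f μ μ)
    (herg : ∀ A : Set α, MeasurableSet A → f ⁻¹' A = A → μ A = 0 ∨ μ A = 1) :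
    Ergodic f μ := by
  refine ⟨hmp, ⟨fun s hs hfs => ?_⟩⟩
  rw [Filter.eventuallyConst_set']
  rcases herg s hs hfs with h | h
  · exact Or.inl (ae_eq_empty.2 h)
  · exact Or.inr (ae_eq_univ.2 ((prob_compl_eq_zero_iff hs).2 h))

/-- If `f` is a locally bi-Lipschitz injection on a compact metric space preserving a Borel
probability measure `μ` ergodically, and the pointwise dimension of `μ` exists almost
everywhere, then it is constant almost everywhere. -/
theorem pointwiseDim_ae_const_of_ergodic
    {X : Type*} [MetricSpace X] [CompactSpace X] [MeasurableSpace X] [BorelSpace X]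
    (μ : Measure X) [IsProbabilityMeasure μ] (f : X → X)
    (hinj : Function.Injective f) (hbl : LocallyBiLipschitz f)
    (hmp : MeasurePreserving f μ μ)
    (herg : ∀ A : Set X, MeasurableSet A → f ⁻¹' A = A → μ A = 0 ∨ μ A = 1)
    (hexists : ∀ᵐ x ∂μ, ∃ L : ℝ,
      Tendsto (fun ε : ℝ => Real.log (μ (Metric.ball x ε)).toReal / Real.log ε)
        (𝓝[>] 0) (𝓝 L)) :
    ∃ d : ℝ, 0 ≤ d ∧ ∀ᵐ x ∂μ,
      Tendsto (fun ε : ℝ => Real.log (μ (Metric.ball x ε)).toReal / Real.log ε)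
        (𝓝[>] 0) (𝓝 d) := by
  have hergodic := ergodic_of_forall_measure_eq_zero_or_one hmp herg
  have hinv := pointwiseDim_comp_ae_eq hinj hbl hmp hexists
  obtain ⟨d, hd⟩ :=
    hergodic.ae_eq_const_of_ae_eq_comp₀ (aemeasurable_pointwiseDim hexists).nullMeasurable hinv
  have hlim : ∀ᵐ x ∂μ, Tendsto (dimRatio μ x) (𝓝[>] 0) (𝓝 (pointwiseDim μ x)) :=
    hexists.mono fun _ => tendsto_nhds_limUnder
  have hd_lim : ∀ᵐ x ∂μ, Tendsto (dimRatio μ x) (𝓝[>] 0) (𝓝 d) := by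
    filter_upwards [hd, hlim] with x hxd hx
    rwa [hxd] at hx
  obtain ⟨x, hx⟩ := hd_lim.exists
  exact ⟨d, nonneg_of_tendsto_dimRatio hx, hd_lim⟩
end
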